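/- arXiv:1710.02980 — 10 statements merged into one kernel-verified Lean document; each statement's English description precedes it below -/
import Mathlib

section
/- Let f(x) = x+1 and g(x) = x³ be homeomorphisms of ℝ. Then the group of homeomorphisms generated by f and g acts topologically transitively on ℝ: for any nonempty open sets U, V ⊆ ℝ, there exists h in the generated group with h(U) ∩ V ≠ ∅. -/
/-!
Every open set contains an interval. Translating by an integer moves it into `[1, ∞)`, where
`x ↦ x³` at least triples lengths; so enough iterations of the cube stretch it to length greater
than `1`, and a final integer translation moves it onto any prescribed point.
-/

open Set

theorem OrderIso.zpow_apply_of_forall_apply_eq_add_const {α : Type*} [AddGroup α] [LE α]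
    {f : α ≃o α} {c : α} (hf : ∀ x, f x = x + c) (n : ℤ) (x : α) : (f ^ n) x = x + n • c := by
  induction n using Int.induction_on generalizing x with
  | zero => simp
  | succ k ih =>
    rw [zpow_add_one, RelIso.mul_apply, hf, ih, add_assoc, add_comm (k : ℤ), add_zsmul, one_zsmul]
  | pred k ih =>
    have hfinv : f⁻¹ x = x + -c :=
      f.injective (by rw [RelIso.apply_inv_self, hf, neg_add_cancel_right])
    rw [zpow_sub_one, RelIso.mul_apply, hfinv, ih, add_assoc, show -(k : ℤ) - 1 = -1 + -k by ring,
      add_zsmul, neg_one_zsmul]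

theorem OrderIso.pow_apply_of_forall_apply_eq_pow {α : Type*} [Monoid α] [LE α]
    {g : α ≃o α} {d : ℕ} (hg : ∀ x, g x = x ^ d) (m : ℕ) (x : α) : (g ^ m) x = x ^ d ^ m := by
  induction m generalizing x with
  | zero => simp
  | succ k ih => rw [pow_succ, RelIso.mul_apply, ih, hg, ← pow_mul, pow_succ']

theorem three_mul_sub_le_pow_three_sub_pow_three {a b : ℝ} (ha : 1 ≤ a) (hab : a ≤ b) :
    3 * (b - a) ≤ b ^ 3 - a ^ 3 := by
  have hq : 3 ≤ a ^ 2 + a * b + b ^ 2 := by nlinarith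
  calc 3 * (b - a) ≤ (a ^ 2 + a * b + b ^ 2) * (b - a) :=
        mul_le_mul_of_nonneg_right hq (sub_nonneg.mpr hab)
    _ = b ^ 3 - a ^ 3 := by ring

theorem three_pow_mul_sub_le_pow_three_pow_sub {a b : ℝ} (ha : 1 ≤ a) (hab : a ≤ b) (m : ℕ) :
    3 ^ m * (b - a) ≤ b ^ 3 ^ m - a ^ 3 ^ m := by
  induction m generalizing a b with
  | zero => simp
  | succ m ih =>
    have ha3 : 1 ≤ a ^ 3 := one_le_pow₀ ha
    have hab3 : a ^ 3 ≤ b ^ 3 := pow_le_pow_left₀ (by linarith) hab 3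
    calc 3 ^ (m + 1) * (b - a) = 3 ^ m * (3 * (b - a)) := by ring
      _ ≤ 3 ^ m * (b ^ 3 - a ^ 3) :=
        mul_le_mul_of_nonneg_left (three_mul_sub_le_pow_three_sub_pow_three ha hab) (by positivity)
      _ ≤ (b ^ 3) ^ 3 ^ m - (a ^ 3) ^ 3 ^ m := ih ha3 hab3
      _ = b ^ 3 ^ (m + 1) - a ^ 3 ^ (m + 1) := by rw [← pow_mul, ← pow_mul, ← pow_succ']

theorem exists_int_mem_Ioo_add {a b : ℝ} (hab : 1 < b - a) (v : ℝ) :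
    ∃ n : ℤ, v ∈ Ioo (a + n) (b + n) := by
  refine ⟨⌊v - b⌋ + 1, ?_, ?_⟩ <;> push_cast
  · linarith [Int.floor_le (v - b)]
  · linarith [Int.lt_floor_add_one (v - b)]

/-- Let `f(x) = x + 1` and `g(x) = x³` be (orientation-preserving) homeomorphisms of `ℝ`.
The group generated by `f` and `g` acts topologically transitively on `ℝ`: for any nonempty
open `U, V ⊆ ℝ` there is `h` in the generated group with `h(U) ∩ V ≠ ∅`. -/
theorem stmt_3 (f g : ℝ ≃o ℝ) (hf : ∀ x : ℝ, f x = x + 1) (hg : ∀ x : ℝ, g x = x ^ 3) :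
    ∀ U V : Set ℝ, IsOpen U → IsOpen V → U.Nonempty → V.Nonempty →
      ∃ h ∈ Subgroup.closure ({f, g} : Set (ℝ ≃o ℝ)), ((h '' U) ∩ V).Nonempty := by
  intro U V hU _ ⟨u, hu⟩ ⟨v, hv⟩
  obtain ⟨ε, hε, hball⟩ := Metric.isOpen_iff.mp hU u hu
  rw [Real.ball_eq_Ioo] at hball
  obtain ⟨k, hk⟩ : ∃ k : ℤ, 1 ≤ u - ε + k :=
    ⟨⌈1 - (u - ε)⌉, by linarith [Int.le_ceil (1 - (u - ε))]⟩
  obtain ⟨m, hm⟩ := pow_unbounded_of_one_lt (1 / (2 * ε)) (by norm_num : (1 : ℝ) < 3)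
  have hstretch : 1 < (u + ε + k) ^ 3 ^ m - (u - ε + k) ^ 3 ^ m := by
    have := three_pow_mul_sub_le_pow_three_pow_sub hk (by linarith : u - ε + k ≤ u + ε + k) m
    rw [div_lt_iff₀ (by positivity)] at hm
    linarith
  obtain ⟨n, hn⟩ := exists_int_mem_Ioo_add hstretch v
  have hfg : f ∈ Subgroup.closure {f, g} ∧ g ∈ Subgroup.closure {f, g} :=
    ⟨Subgroup.subset_closure (by simp), Subgroup.subset_closure (by simp)⟩
  have happly (x : ℝ) : (f ^ n * g ^ m * f ^ k) x = (x + k) ^ 3 ^ m + n := by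
    simp only [RelIso.mul_apply, OrderIso.zpow_apply_of_forall_apply_eq_add_const hf,
      OrderIso.pow_apply_of_forall_apply_eq_pow hg, zsmul_one]
  refine ⟨f ^ n * g ^ m * f ^ k,
    mul_mem (mul_mem (zpow_mem hfg.1 n) (pow_mem hfg.2 m)) (zpow_mem hfg.1 k), v, ?_, hv⟩
  apply image_mono hball
  rw [OrderIso.image_Ioo, happly, happly]
  exact hn
end

section
/- Let f, g be orientation-preserving homeomorphisms of ℝ with f∘g = g⁻¹∘f. Suppose (u,v) is an open interval (possibly with u = −∞ or v = +∞) on which g has no fixed points and whose finite endpoints are fixed by g. Then f((u,v)) ∩ (u,v) = ∅. -/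
/-!
Since `I` is connected and `g` has no fixed point in it, `g` moves all points of `I` in the
same direction, say `x < g x`. Applying `f` gives `f x < f (g x) = g⁻¹ (f x)`, i.e. `g` moves
`f x` to the left, so `f x ∉ I`.
-/

open Set

theorem IsPreconnected.forall_lt_or_forall_lt_of_ne {X α : Type*} [TopologicalSpace X]
    [LinearOrder α] [TopologicalSpace α] [OrderClosedTopology α] {s : Set X}
    (hs : IsPreconnected s) {f g : X → α} (hf : ContinuousOn f s) (hg : ContinuousOn g s)
    (hne : ∀ x ∈ s, f x ≠ g x) : (∀ x ∈ s, f x < g x) ∨ (∀ x ∈ s, g x < f x) := by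
  by_contra! h
  obtain ⟨⟨a, ha, hga⟩, ⟨b, hb, hfb⟩⟩ := h
  obtain ⟨x, hx, hfgx⟩ := hs.intermediate_value₂ hb ha hf hg hfb hga
  exact hne x hx hfgx

namespace OrderIso

variable {α : Type*} [LinearOrder α] {f g : α ≃o α}

theorem lt_apply_iff_of_semiconj_symm (h : Function.Semiconj f g g.symm) (x : α) :
    x < g x ↔ g (f x) < f x := by
  rw [← f.lt_iff_lt, h x, g.lt_symm_apply]

theorem apply_lt_iff_of_semiconj_symm (h : Function.Semiconj f g g.symm) (x : α) :
    g x < x ↔ f x < g (f x) := by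
  rw [← f.lt_iff_lt, h x, g.symm_apply_lt]

end OrderIso

theorem stmt_6_general (f g : ℝ ≃o ℝ) (hrel : ∀ x : ℝ, f (g x) = g⁻¹ (f x))
    (u v : EReal)
    (I : Set ℝ) (hI : I = {x : ℝ | u < (x : EReal) ∧ (x : EReal) < v})
    (hnofix : ∀ x ∈ I, g x ≠ x) :
    (f '' I) ∩ I = ∅ := by
  have hconn : IsPreconnected I := by
    subst hI
    exact (ordConnected_Ioo.preimage_mono EReal.coe_strictMono.monotone :
      OrdConnected (((↑) : ℝ → EReal) ⁻¹' Ioo u v)).isPreconnected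
  rw [eq_empty_iff_forall_notMem]
  rintro _ ⟨⟨x, hx, rfl⟩, hfx⟩
  rcases hconn.forall_lt_or_forall_lt_of_ne continuousOn_id g.continuous.continuousOn
    (fun y hy ↦ (hnofix y hy).symm) with hlt | hgt
  · exact (hlt _ hfx).not_gt ((OrderIso.lt_apply_iff_of_semiconj_symm hrel x).1 (hlt x hx))
  · exact (hgt _ hfx).not_gt ((OrderIso.apply_lt_iff_of_semiconj_symm hrel x).1 (hgt x hx))

/-- Let `f, g` be orientation-preserving homeomorphisms of `ℝ` with `f ∘ g = g⁻¹ ∘ f`.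
If `I` is the open interval with endpoints `u, v ∈ EReal` (possibly infinite), `I` is a
nonempty proper subset of `ℝ` on which `g` has no fixed points and whose finite endpoints
are fixed by `g`, then `f(I) ∩ I = ∅`. -/
theorem stmt_6 (f g : ℝ ≃o ℝ) (hrel : ∀ x : ℝ, f (g x) = g⁻¹ (f x))
    (u v : EReal) (huv : u < v)
    (I : Set ℝ) (hI : I = {x : ℝ | u < (x : EReal) ∧ (x : EReal) < v})
    (hne : I.Nonempty) (hproper : I ≠ Set.univ)
    (hnofix : ∀ x ∈ I, g x ≠ x)
    (hu : ∀ x : ℝ, (x : EReal) = u → g x = x)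
    (hv : ∀ x : ℝ, (x : EReal) = v → g x = x) :
    (f '' I) ∩ I = ∅ :=
  stmt_6_general f g hrel u v I hI hnofix
end

section
/- Define f(x) = x+1, and for an integer k ≥ 2 define g: ℝ → ℝ by g(x) = (x−n)^{2^{((-1)^n k^{-n})}} + n for x ∈ [n, n+1), n ∈ ℤ. Then g is a homeomorphism of ℝ and f ∘ g ∘ f⁻¹ = g^{−k}. -/
/-!
Write `g = Φ e`, where for `e : ℤ → ℝ` the map `Φ e` raises the fractional part of `x ∈ [n, n+1)`
to the power `2 ^ e n`. Each `Φ e` preserves every interval `[n, n+1)`, and since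
`(t ^ 2 ^ a) ^ 2 ^ b = t ^ 2 ^ (a + b)`, `e ↦ Φ e` is a group homomorphism from `(ℤ → ℝ, +)` to
`Homeo₊(ℝ)`; in particular `g ^ j = Φ (j • e)`. Conjugating by the translation `f` shifts the
exponent sequence, `f ∘ Φ e ∘ f⁻¹ = Φ (e (· - 1))`, and the exponents `e n = (-1)ⁿ k⁻ⁿ` satisfy
`e (n - 1) = -k e n`.
-/

open Real

noncomputable section

def fractPow (e : ℤ → ℝ) (x : ℝ) : ℝ :=
  Int.fract x ^ (2 : ℝ) ^ e ⌊x⌋ + ⌊x⌋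

lemma floor_fractPow (e : ℤ → ℝ) (x : ℝ) : ⌊fractPow e x⌋ = ⌊x⌋ := by
  have hpos : 0 < (2 : ℝ) ^ e ⌊x⌋ := by positivity
  have h0 := rpow_nonneg (Int.fract_nonneg x) ((2 : ℝ) ^ e ⌊x⌋)
  have h1 := rpow_lt_one (Int.fract_nonneg x) (Int.fract_lt_one x) hpos
  rw [Int.floor_eq_iff, fractPow]
  constructor <;> linarith

lemma fract_fractPow (e : ℤ → ℝ) (x : ℝ) :
    Int.fract (fractPow e x) = Int.fract x ^ (2 : ℝ) ^ e ⌊x⌋ := by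
  rw [Int.fract, floor_fractPow, fractPow, add_sub_cancel_right]

lemma fractPow_zero : fractPow 0 = id := by
  funext x
  simp [fractPow, Int.fract_add_floor]

lemma fractPow_fractPow (e e' : ℤ → ℝ) (x : ℝ) :
    fractPow e (fractPow e' x) = fractPow (e + e') x := by
  rw [fractPow, fract_fractPow, floor_fractPow, ← rpow_mul (Int.fract_nonneg x),
    ← rpow_add two_pos, fractPow, Pi.add_apply, add_comm (e' _)]

lemma fractPow_strictMono (e : ℤ → ℝ) : StrictMono (fractPow e) := by
  intro x y hxy
  rcases (Int.floor_le_floor hxy.le).lt_or_eq with hlt | heq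
  · have hx := (Int.floor_eq_iff.mp (floor_fractPow e x)).2
    have hy := (Int.floor_eq_iff.mp (floor_fractPow e y)).1
    have : (⌊x⌋ : ℝ) + 1 ≤ ⌊y⌋ := by exact_mod_cast hlt
    linarith
  · have hfract : Int.fract x < Int.fract y := by
      rw [Int.fract, Int.fract, heq]
      linarith
    rw [fractPow, fractPow, heq, add_lt_add_iff_right]
    exact rpow_lt_rpow (Int.fract_nonneg x) hfract (by positivity)

def fractPowIso (e : ℤ → ℝ) : ℝ ≃o ℝ where
  toFun := fractPow e
  invFun := fractPow (-e)
  left_inv x := by rw [fractPow_fractPow, neg_add_cancel, fractPow_zero, id]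
  right_inv x := by rw [fractPow_fractPow, add_neg_cancel, fractPow_zero, id]
  map_rel_iff' := (fractPow_strictMono e).le_iff_le

lemma fractPowIso_apply (e : ℤ → ℝ) (x : ℝ) : fractPowIso e x = fractPow e x := rfl

def fractPowHom : Multiplicative (ℤ → ℝ) →* ℝ ≃o ℝ where
  toFun e := fractPowIso e.toAdd
  map_one' := by ext x; simp [fractPowIso_apply, fractPow_zero]
  map_mul' e e' := by ext x; exact (fractPow_fractPow _ _ x).symm

lemma fractPowIso_zpow (e : ℤ → ℝ) (j : ℤ) : fractPowIso e ^ j = fractPowIso (j • e) :=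
  (map_zpow fractPowHom (Multiplicative.ofAdd e) j).symm

lemma fractPow_sub_one_add_one (e : ℤ → ℝ) (x : ℝ) :
    fractPow e (x - 1) + 1 = fractPow (fun n ↦ e (n - 1)) x := by
  simp only [fractPow, Int.fract_sub_one, Int.floor_sub_one]
  push_cast
  ring

lemma neg_one_zpow_mul_zpow_neg_sub_one {k : ℝ} (hk : k ≠ 0) (n : ℤ) :
    (-1 : ℝ) ^ (n - 1) * k ^ (-(n - 1)) = -k * ((-1 : ℝ) ^ n * k ^ (-n)) := by
  rw [zpow_sub₀ (by norm_num), neg_sub, zpow_sub₀ hk, zpow_one, zpow_one, zpow_neg]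
  field_simp

end

open Real in
/-- For `k ≥ 2`, the map `g(x) = (x − n) ^ (2 ^ ((-1)ⁿ k⁻ⁿ)) + n` for `x ∈ [n, n+1)`
(`n = ⌊x⌋`) is an (orientation-preserving) homeomorphism of `ℝ`, and with `f(x) = x + 1`
one has `f ∘ g ∘ f⁻¹ = g^(−k)`. -/
theorem stmt_7 (k : ℕ) (hk : 2 ≤ k) :
    ∃ g : ℝ ≃o ℝ,
      (∀ x : ℝ,
        g x = (x - ⌊x⌋) ^ ((2 : ℝ) ^ ((-1 : ℝ) ^ ⌊x⌋ * (k : ℝ) ^ (-⌊x⌋))) + ⌊x⌋) ∧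
      ∀ x : ℝ, g (x - 1) + 1 = (g ^ (-(k : ℤ))) x := by
  set e : ℤ → ℝ := fun n ↦ (-1 : ℝ) ^ n * (k : ℝ) ^ (-n)
  have hk0 : (k : ℝ) ≠ 0 := Nat.cast_ne_zero.mpr (by omega)
  refine ⟨fractPowIso e, fun x ↦ rfl, fun x ↦ ?_⟩
  rw [fractPowIso_zpow, fractPowIso_apply, fractPowIso_apply, fractPow_sub_one_add_one]
  congr 1
  funext n
  rw [Pi.smul_apply, zsmul_eq_mul, Int.cast_neg, Int.cast_natCast]
  exact neg_one_zpow_mul_zpow_neg_sub_one hk0 n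
end

section
/- Let G be a countable group. If G has no topologically transitive action on ℝ by orientation-preserving homeomorphisms, then for every action of G on ℝ by orientation-preserving homeomorphisms and every x ∈ ℝ, the orbit closure of x is countable. -/
set_option maxHeartbeats 1000000

/-- An orientation-preserving action `φ : G →* (ℝ ≃o ℝ)` is topologically transitive if for
all nonempty open `U, V ⊆ ℝ` there is `g` with `φ g (U) ∩ V ≠ ∅`. -/
def IsTopTransitive {G : Type*} [Group G] (φ : G →* (ℝ ≃o ℝ)) : Prop :=
  ∀ U V : Set ℝ, IsOpen U → IsOpen V → U.Nonempty → V.Nonempty →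
    ∃ g : G, ((φ g '' U) ∩ V).Nonempty

open Set MeasureTheory Function ENNReal


noncomputable def dig (r : ℝ) (n : ℕ) : Bool := decide (⌊r * 2 ^ (n+1)⌋ % 2 = 1)

lemma dig_measurable : Measurable (fun r : ℝ => (fun n => dig r n)) := by
  apply measurable_pi_lambda
  intro n
  have h1 : Measurable (fun r : ℝ => ⌊r * 2 ^ (n+1)⌋) :=
    (measurable_id.mul_const _).floor
  exact (measurable_of_countable (fun z : ℤ => decide (z % 2 = 1))).comp h1

lemma floor_two_mul (y : ℝ) : ⌊2 * y⌋ = 2 * ⌊y⌋ ∨ ⌊2 * y⌋ = 2 * ⌊y⌋ + 1 := by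
  have h1 : (2 : ℤ) * ⌊y⌋ ≤ ⌊2 * y⌋ := by
    apply Int.le_floor.2
    push_cast
    nlinarith [Int.floor_le y]
  have h2 : ⌊2 * y⌋ < 2 * ⌊y⌋ + 2 := by
    apply Int.floor_lt.2
    push_cast
    nlinarith [Int.lt_floor_add_one y]
  omega

lemma dig_inj {r s : ℝ} (hr : r ∈ Ico (0:ℝ) 1) (hs : s ∈ Ico (0:ℝ) 1)
    (h : ∀ n, dig r n = dig s n) : r = s := by
  have key : ∀ n : ℕ, ⌊r * 2 ^ n⌋ = ⌊s * 2 ^ n⌋ := by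
    intro n
    induction n with
    | zero =>
      simp only [pow_zero, mul_one]
      rw [Int.floor_eq_zero_iff.2 (by exact ⟨hr.1, hr.2⟩),
        Int.floor_eq_zero_iff.2 (by exact ⟨hs.1, hs.2⟩)]
    | succ n ih =>
      have hr2 : r * 2 ^ (n+1) = 2 * (r * 2 ^ n) := by ring
      have hs2 : s * 2 ^ (n+1) = 2 * (s * 2 ^ n) := by ring
      have hd := h n
      unfold dig at hd
      have hd' : (⌊r * 2 ^ (n+1)⌋ % 2 = 1) ↔ (⌊s * 2 ^ (n+1)⌋ % 2 = 1) := by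
        constructor <;> intro hh <;> simp [hh] at hd ⊢ <;> omega
      rw [hr2] at hd' ⊢
      rw [hs2] at hd' ⊢
      rcases floor_two_mul (r * 2 ^ n) with h1 | h1 <;>
        rcases floor_two_mul (s * 2 ^ n) with h2 | h2 <;> omega
  have habs : ∀ n : ℕ, |r - s| < 1 / 2 ^ n := by
    intro n
    have h1 := Int.floor_le (r * 2 ^ n)
    have h2 := Int.lt_floor_add_one (r * 2 ^ n)
    have h3 := Int.floor_le (s * 2 ^ n)
    have h4 := Int.lt_floor_add_one (s * 2 ^ n)
    rw [key n] at h1 h2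
    have hp : (0:ℝ) < 2 ^ n := by positivity
    rw [abs_lt]
    constructor
    · rw [neg_lt, neg_sub, lt_div_iff₀ hp]; nlinarith
    · rw [lt_div_iff₀ hp]; nlinarith
  by_contra hne
  have hpos : 0 < |r - s| := abs_pos.2 (sub_ne_zero.2 hne)
  obtain ⟨n, hn⟩ := exists_pow_lt_of_lt_one hpos (by norm_num : (1/2:ℝ) < 1)
  have := habs n
  rw [one_div, inv_pow, ← one_div] at hn
  linarith

lemma exists_nice_measure (S : Set ℝ) (hS : IsClosed S) (hunc : ¬S.Countable) :
    ∃ ν : Measure ℝ, IsProbabilityMeasure ν ∧ (∀ y : ℝ, ν {y} = 0) ∧ ν Sᶜ = 0 ∧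
      (∀ A : Set ℝ, MeasurableSet A → 0 < ν A → ¬(A ∩ S).Countable) := by
  obtain ⟨f, hfS, hfc, hfi⟩ := hS.exists_nat_bool_injection_of_not_countable hunc
  set g : ℝ → ℝ := fun r => f (fun n => dig r n) with hg
  have hgm : Measurable g := hfc.measurable.comp dig_measurable
  set ν : Measure ℝ := Measure.map g (volume.restrict (Ico (0:ℝ) 1)) with hν
  have happ : ∀ A : Set ℝ, MeasurableSet A → ν A = volume (g ⁻¹' A ∩ Ico (0:ℝ) 1) := by
    intro A hA
    rw [hν, Measure.map_apply hgm hA, Measure.restrict_apply (hgm hA)]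
  have hginj : InjOn g (Ico (0:ℝ) 1) := by
    intro a ha b hb hab
    exact dig_inj ha hb (funext_iff.1 (hfi hab))
  refine ⟨ν, ?_, ?_, ?_, ?_⟩
  · constructor
    rw [happ univ MeasurableSet.univ]
    simp [Real.volume_Ico]
  · intro y
    rw [happ {y} (measurableSet_singleton y)]
    apply Set.Subsingleton.measure_zero
    intro a ⟨ha1, ha2⟩ b ⟨hb1, hb2⟩
    exact hginj ha2 hb2 (by rw [ha1, hb1])
  · rw [happ Sᶜ hS.measurableSet.compl]
    convert measure_empty (μ := volume)
    ext r
    simp only [mem_inter_iff, mem_preimage, mem_compl_iff, mem_empty_iff_false, iff_false,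
      not_and]
    intro h
    exact absurd (hfS ⟨_, rfl⟩) h
  · intro A hA hpos
    rw [happ A hA] at hpos
    intro hcnt
    set B := g ⁻¹' A ∩ Ico (0:ℝ) 1 with hB
    have himg : g '' B ⊆ A ∩ S := by
      rintro y ⟨r, ⟨hr1, hr2⟩, rfl⟩
      exact ⟨hr1, hfS ⟨_, rfl⟩⟩
    have hBc : B.Countable := by
      have h1 : (g '' B).Countable := hcnt.mono himg
      exact MapsTo.countable_of_injOn (mapsTo_image g B)
        (hginj.mono inter_subset_right) h1
    exact absurd (hBc.measure_zero volume) (by exact ne_of_gt hpos)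

def condSet (C : Set ℝ) : Set ℝ :=
  {y : ℝ | ∀ a b : ℝ, a < y → y < b → ¬(Ioo a b ∩ C).Countable}

lemma exists_cond_point {S : Set ℝ} (hunc : ¬S.Countable) :
    ∃ z ∈ S, ∀ a b : ℝ, a < z → z < b → ¬(Ioo a b ∩ S).Countable := by
  obtain ⟨bas, hbc, -, hbasis⟩ := TopologicalSpace.exists_countable_basis ℝ
  by_contra h
  push_neg at h
  have hsub : S ⊆ ⋃ B ∈ {B ∈ bas | (B ∩ S).Countable}, (B ∩ S) := by
    intro z hz
    obtain ⟨a, b', haz, hzb, hcnt⟩ := h z hz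
    obtain ⟨B, hBb, hzB, hBsub⟩ :=
      hbasis.exists_subset_of_mem_open (show z ∈ Ioo a b' from ⟨haz, hzb⟩) isOpen_Ioo
    refine mem_biUnion ⟨hBb, hcnt.mono ?_⟩ ⟨hzB, hz⟩
    exact inter_subset_inter_left _ hBsub
  have hc : ({B ∈ bas | (B ∩ S).Countable} : Set (Set ℝ)).Countable :=
    hbc.mono (sep_subset _ _)
  have hcU : (⋃ B ∈ {B ∈ bas | (B ∩ S).Countable}, (B ∩ S)).Countable :=
    hc.biUnion (fun B hB => hB.2)
  exact hunc (hcU.mono hsub)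

lemma nonempty_of_not_countable {S : Set ℝ} (h : ¬S.Countable) : S.Nonempty := by
  rw [nonempty_iff_ne_empty]
  rintro rfl
  exact h countable_empty

lemma cond_in_closure {C : Set ℝ} (hC : IsClosed C) : condSet C ⊆ C := by
  intro z hz
  rw [← hC.closure_eq, mem_closure_iff]
  intro O hO hzO
  obtain ⟨ε, hε, hball⟩ := Metric.isOpen_iff.1 hO z hzO
  obtain ⟨w, hw1, hw2⟩ := nonempty_of_not_countable (hz (z - ε) (z + ε)
    (by linarith) (by linarith))
  exact ⟨w, hball (by rw [Real.ball_eq_Ioo]; exact hw1), hw2⟩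

lemma exists_global_measure (C : Set ℝ) (hC : IsClosed C) (hunc : ¬C.Countable) :
    ∃ μ : Measure ℝ, IsFiniteMeasure μ ∧ (∀ y : ℝ, μ {y} = 0) ∧
      (∀ a b : ℝ, (Ioo a b ∩ condSet C).Nonempty → 0 < μ (Ioo a b)) ∧
      (∀ a b : ℝ, 0 < μ (Ioo a b) → (Ioo a b ∩ condSet C).Nonempty) := by
  classical
  set I := {pq : ℚ × ℚ // ¬((Set.Icc ((pq.1 : ℝ)) ((pq.2 : ℝ))) ∩ C).Countable} with hI
  have hIc : Countable I := by infer_instance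
  obtain ⟨c, hcinj⟩ := Countable.exists_injective_nat I
  have hSclosed : ∀ i : I, IsClosed (Icc ((i.1.1 : ℝ)) ((i.1.2 : ℝ)) ∩ C) :=
    fun i => isClosed_Icc.inter hC
  choose ν hνp hνa hνc hνu using fun i : I =>
    exists_nice_measure _ (hSclosed i) i.2
  set μ : Measure ℝ := Measure.sum (fun i : I => ((2 : ℝ≥0∞)⁻¹ ^ (c i)) • ν i) with hμ
  have happ : ∀ A : Set ℝ, MeasurableSet A →
      μ A = ∑' i : I, ((2 : ℝ≥0∞)⁻¹ ^ (c i)) * ν i A := by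
    intro A hA
    rw [hμ, Measure.sum_apply _ hA]
    rfl
  have hfin : IsFiniteMeasure μ := by
    constructor
    rw [happ univ MeasurableSet.univ]
    have h1 : ∀ i : I, ((2 : ℝ≥0∞)⁻¹ ^ (c i)) * ν i univ = (2 : ℝ≥0∞)⁻¹ ^ (c i) := by
      intro i
      rw [(hνp i).measure_univ, mul_one]
    rw [tsum_congr h1]
    have h2 : ∑' i : I, (2 : ℝ≥0∞)⁻¹ ^ (c i) ≤ ∑' n : ℕ, (2 : ℝ≥0∞)⁻¹ ^ n := by
      exact ENNReal.summable.tsum_le_tsum_of_inj c hcinj (fun _ _ => zero_le) (fun _ => le_rfl)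
        ENNReal.summable
    refine lt_of_le_of_lt h2 ?_
    rw [ENNReal.tsum_geometric, ENNReal.one_sub_inv_two]
    exact ENNReal.inv_lt_top.2 (by norm_num)
  refine ⟨μ, hfin, ?_, ?_, ?_⟩
  · intro y
    rw [happ {y} (measurableSet_singleton y)]
    simp [hνa]
  · rintro a b ⟨y, hy1, hy2⟩
    obtain ⟨p, hp1, hp2⟩ := exists_rat_btwn hy1.1
    obtain ⟨q, hq1, hq2⟩ := exists_rat_btwn hy1.2
    have hcnt : ¬((Set.Icc ((p : ℝ)) ((q : ℝ))) ∩ C).Countable := by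
      intro hcnt
      exact hy2 p q hp2 hq1 (hcnt.mono (inter_subset_inter_left _ Ioo_subset_Icc_self))
    set i : I := ⟨(p, q), hcnt⟩ with hi
    have hν1 : ν i (Ioo a b) = 1 := by
      have hcompl : ν i (Ioo a b)ᶜ = 0 := by
        have hsub : (Ioo a b)ᶜ ⊆ (Icc ((p:ℝ)) ((q:ℝ)) ∩ C)ᶜ := by
          apply compl_subset_compl.2
          intro w hw
          exact ⟨lt_of_lt_of_le hp1 hw.1.1, lt_of_le_of_lt hw.1.2 hq2⟩
        exact le_antisymm (le_trans (measure_mono hsub) (le_of_eq (hνc i))) zero_le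
      have h2 := measure_compl (μ := ν i) (s := (Ioo a b)ᶜ) measurableSet_Ioo.compl
        (measure_ne_top _ _)
      rw [compl_compl] at h2
      rw [h2, hcompl, (hνp i).measure_univ, tsub_zero]
    have hle : ((2 : ℝ≥0∞)⁻¹ ^ (c i)) * ν i (Ioo a b) ≤ μ (Ioo a b) := by
      rw [happ _ measurableSet_Ioo]
      exact ENNReal.le_tsum i
    rw [hν1, mul_one] at hle
    exact lt_of_lt_of_le (ENNReal.pow_pos (ENNReal.inv_pos.2 (by norm_num)) _) hle
  · intro a b hpos
    rw [happ _ measurableSet_Ioo] at hpos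
    have : ∃ i : I, 0 < ν i (Ioo a b) := by
      by_contra hno
      push_neg at hno
      simp only [nonpos_iff_eq_zero] at hno
      rw [tsum_congr (fun i => by rw [hno i, mul_zero]), tsum_zero] at hpos
      exact lt_irrefl _ hpos
    obtain ⟨i, hi⟩ := this
    have huncc := hνu i _ measurableSet_Ioo hi
    have huncc' : ¬(Ioo a b ∩ C).Countable := by
      intro hcnt
      exact huncc (hcnt.mono (by intro w hw; exact ⟨hw.1, hw.2.2⟩))
    obtain ⟨z, ⟨hz1, hz2⟩, hz3⟩ := exists_cond_point huncc'
    refine ⟨z, hz1, ?_⟩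
    intro a' b' ha' hb'
    intro hcnt
    exact hz3 a' b' ha' hb' (hcnt.mono (by intro w hw; exact ⟨hw.1, hw.2.2⟩))

section H

variable (μ : Measure ℝ) [IsFiniteMeasure μ]

noncomputable def hh (t : ℝ) : ℝ := (μ (Iio t)).toReal

lemma hh_def (t : ℝ) : hh μ t = (μ (Iio t)).toReal := rfl


noncomputable def MM : ℝ := (μ univ).toReal

lemma MM_def : MM μ = (μ univ).toReal := rfl

lemma hh_mono : Monotone (hh μ) := fun s t hst =>
  ENNReal.toReal_mono (measure_ne_top μ _) (measure_mono (Iio_subset_Iio hst))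

lemma hh_lt_of_measure_pos {s t : ℝ} (hst : s ≤ t) (hpos : 0 < μ (Ioo s t)) :
    hh μ s < hh μ t := by
  have hsub : Iio s ∪ Ioo s t ⊆ Iio t := by
    rintro w (hw | hw)
    · exact lt_of_lt_of_le hw hst
    · exact hw.2
  have hdisj : Disjoint (Iio s) (Ioo s t) := by
    rw [Set.disjoint_left]
    intro w hw1 hw2
    exact absurd hw2.1 (not_lt.2 hw1.le)
  have h1 : μ (Iio s) + μ (Ioo s t) ≤ μ (Iio t) := by
    rw [← measure_union hdisj measurableSet_Ioo]
    exact measure_mono hsub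
  have h2 : μ (Iio s) < μ (Iio t) := by
    calc μ (Iio s) < μ (Iio s) + μ (Ioo s t) :=
          ENNReal.lt_add_right (measure_ne_top μ _) (ne_of_gt hpos)
      _ ≤ μ (Iio t) := h1
  exact (ENNReal.toReal_lt_toReal (measure_ne_top μ _) (measure_ne_top μ _)).2 h2

lemma measure_Ioo_zero_of_hh_eq (hatom : ∀ y : ℝ, μ {y} = 0) {s t : ℝ} (hst : s < t)
    (heq : hh μ s = hh μ t) : μ (Ioo s t) = 0 := by
  by_contra hne
  have := hh_lt_of_measure_pos μ hst.le (pos_iff_ne_zero.2 hne)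
  rw [heq] at this
  exact lt_irrefl _ this

lemma hh_eq_of_measure_Ioo_zero (hatom : ∀ y : ℝ, μ {y} = 0) {s t : ℝ} (hst : s < t)
    (hzero : μ (Ioo s t) = 0) : hh μ s = hh μ t := by
  have hco : μ (Ico s t) = 0 := by
    rw [← Ioo_insert_left hst, insert_eq]
    refine le_antisymm (le_trans (measure_union_le _ _) ?_) zero_le
    rw [hatom s, hzero, add_zero]
  have : μ (Iio t) ≤ μ (Iio s) + μ (Ico s t) := by
    rw [← Iio_union_Ico_eq_Iio hst.le] at *
    exact measure_union_le _ _
  rw [hco, add_zero] at this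
  exact le_antisymm (hh_mono μ hst.le)
    (ENNReal.toReal_mono (measure_ne_top μ _) this)

lemma hh_nonneg (t : ℝ) : 0 ≤ hh μ t := ENNReal.toReal_nonneg

lemma hh_le_MM (t : ℝ) : hh μ t ≤ MM μ :=
  ENNReal.toReal_mono (measure_ne_top μ _) (measure_mono (subset_univ _))

lemma hh_surj (hatom : ∀ y : ℝ, μ {y} = 0) {u : ℝ} (h0 : 0 < u) (hM : u < MM μ) :
    ∃ t : ℝ, hh μ t = u := by
  set A := {t : ℝ | hh μ t ≤ u} with hA
  -- A is nonempty
  have hne : A.Nonempty := by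
    have hI : (⋂ n : ℕ, Iio (-(n:ℝ))) = ∅ := by
      ext t
      simp only [mem_iInter, mem_Iio, mem_empty_iff_false, iff_false, not_forall, not_lt]
      obtain ⟨n, hn⟩ := exists_nat_gt (-t)
      exact ⟨n, by linarith⟩
    have htend : Filter.Tendsto (fun n : ℕ => μ (Iio (-(n:ℝ)))) Filter.atTop (nhds 0) := by
      have := tendsto_measure_iInter_atTop (μ := μ)
        (s := fun n : ℕ => Iio (-(n:ℝ)))
        (fun n => measurableSet_Iio.nullMeasurableSet)
        (fun n m hnm => Iio_subset_Iio (by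
          have hc : (n:ℝ) ≤ (m:ℝ) := Nat.cast_le.2 hnm
          linarith))
        ⟨0, measure_ne_top μ _⟩
      rwa [hI, measure_empty] at this
    have hlt : ∀ᶠ n : ℕ in Filter.atTop, μ (Iio (-(n:ℝ))) < ENNReal.ofReal u := by
      refine htend.eventually_lt_const ?_
      exact ENNReal.ofReal_pos.2 h0
    obtain ⟨n, hn⟩ := hlt.exists
    refine ⟨-(n:ℝ), ?_⟩
    rw [hA, mem_setOf_eq, hh_def]
    exact (ENNReal.toReal_lt_of_lt_ofReal hn).le
  -- A is bounded above
  have hbdd : BddAbove A := by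
    have hU : (⋃ n : ℕ, Iio ((n:ℝ))) = univ := by
      ext t
      simp only [mem_iUnion, mem_Iio, mem_univ, iff_true]
      obtain ⟨n, hn⟩ := exists_nat_gt t
      exact ⟨n, hn⟩
    have htend : Filter.Tendsto (fun n : ℕ => μ (Iio ((n:ℝ)))) Filter.atTop (nhds (μ univ)) := by
      have := tendsto_measure_iUnion_atTop (μ := μ) (s := fun n : ℕ => Iio ((n:ℝ)))
        (fun n m hnm => Iio_subset_Iio (Nat.cast_le.2 hnm))
      rwa [hU] at this
    have hlt : ∀ᶠ n : ℕ in Filter.atTop, ENNReal.ofReal u < μ (Iio ((n:ℝ))) := by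
      refine htend.eventually_const_lt ?_
      rw [ENNReal.ofReal_lt_iff_lt_toReal h0.le (measure_ne_top μ _)]
      exact hM
    obtain ⟨n, hn⟩ := hlt.exists
    refine ⟨(n:ℝ), fun t ht => ?_⟩
    by_contra hlt'
    push_neg at hlt'
    have h1 : hh μ (n:ℝ) ≤ hh μ t := hh_mono μ hlt'.le
    have h2 : u < hh μ (n:ℝ) := by
      rw [hh_def, ← ENNReal.ofReal_lt_iff_lt_toReal h0.le (measure_ne_top μ _)]
      exact hn
    exact absurd (le_trans h1 ht) (not_le.2 h2)
  set t0 := sSup A with ht0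
  have hle : hh μ t0 ≤ u := by
    have hIU : Iio t0 = ⋃ n : ℕ, Iio (t0 - 1/((n:ℝ)+1)) := by
      ext s
      simp only [mem_iUnion, mem_Iio]
      constructor
      · intro hs
        obtain ⟨n, hn⟩ := exists_nat_one_div_lt (show 0 < t0 - s by linarith)
        exact ⟨n, by linarith⟩
      · rintro ⟨n, hn⟩
        have : 0 < 1/((n:ℝ)+1) := by positivity
        linarith
    have hmon : Monotone (fun n : ℕ => Iio (t0 - 1/((n:ℝ)+1))) := by
      intro n m hnm
      apply Iio_subset_Iio
      have hc : (n:ℝ) ≤ (m:ℝ) := Nat.cast_le.2 hnm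
      have h1 : ((n:ℝ)+1) ≤ ((m:ℝ)+1) := by linarith
      have h2 : 1/((m:ℝ)+1) ≤ 1/((n:ℝ)+1) := by
        apply one_div_le_one_div_of_le (by positivity) h1
      linarith
    have hcalc : μ (Iio t0) = ⨆ n : ℕ, μ (Iio (t0 - 1/((n:ℝ)+1))) := by
      rw [hIU]
      exact hmon.measure_iUnion
    have hbound : ∀ n : ℕ, μ (Iio (t0 - 1/((n:ℝ)+1))) ≤ ENNReal.ofReal u := by
      intro n
      have hlt : t0 - 1/((n:ℝ)+1) < t0 := by
        have : 0 < 1/((n:ℝ)+1) := by positivity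
        linarith
      obtain ⟨t, htA, htgt⟩ := exists_lt_of_lt_csSup hne hlt
      refine le_trans (measure_mono (Iio_subset_Iio htgt.le)) ?_
      rw [hA, mem_setOf_eq, hh_def,
        ← ENNReal.le_ofReal_iff_toReal_le (measure_ne_top μ _) h0.le] at htA
      exact htA
    have : μ (Iio t0) ≤ ENNReal.ofReal u := by
      rw [hcalc]
      exact iSup_le hbound
    rw [hh_def]
    calc (μ (Iio t0)).toReal ≤ (ENNReal.ofReal u).toReal :=
          ENNReal.toReal_mono ENNReal.ofReal_ne_top this
      _ = u := ENNReal.toReal_ofReal h0.le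
  have hge : u ≤ hh μ t0 := by
    have hII : Iic t0 = ⋂ n : ℕ, Iio (t0 + 1/((n:ℝ)+1)) := by
      ext s
      simp only [mem_iInter, mem_Iio, mem_Iic]
      constructor
      · intro hs n
        have : 0 < 1/((n:ℝ)+1) := by positivity
        linarith
      · intro hs
        by_contra hlt'
        push_neg at hlt'
        obtain ⟨n, hn⟩ := exists_nat_one_div_lt (show 0 < s - t0 by linarith)
        have := hs n
        linarith
    have hanti : Antitone (fun n : ℕ => Iio (t0 + 1/((n:ℝ)+1))) := by
      intro n m hnm
      apply Iio_subset_Iio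
      have hc : (n:ℝ) ≤ (m:ℝ) := Nat.cast_le.2 hnm
      have h1 : ((n:ℝ)+1) ≤ ((m:ℝ)+1) := by linarith
      have h2 : 1/((m:ℝ)+1) ≤ 1/((n:ℝ)+1) := by
        apply one_div_le_one_div_of_le (by positivity) h1
      linarith
    have hcalc : μ (Iic t0) = ⨅ n : ℕ, μ (Iio (t0 + 1/((n:ℝ)+1))) := by
      rw [hII]
      exact hanti.measure_iInter (fun n => measurableSet_Iio.nullMeasurableSet)
        ⟨0, measure_ne_top μ _⟩
    have hbound : ∀ n : ℕ, ENNReal.ofReal u ≤ μ (Iio (t0 + 1/((n:ℝ)+1))) := by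
      intro n
      have hgt : t0 < t0 + 1/((n:ℝ)+1) := by
        have : 0 < 1/((n:ℝ)+1) := by positivity
        linarith
      have hnotin : t0 + 1/((n:ℝ)+1) ∉ A := fun hmem =>
        absurd (le_csSup hbdd hmem) (not_le.2 hgt)
      rw [hA, mem_setOf_eq, not_le, hh_def] at hnotin
      rw [ENNReal.ofReal_le_iff_le_toReal (measure_ne_top μ _)]
      exact hnotin.le
    have h1 : ENNReal.ofReal u ≤ μ (Iic t0) := by
      rw [hcalc]
      exact le_iInf hbound
    have h2 : μ (Iic t0) ≤ μ (Iio t0) := by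
      have : Iic t0 ⊆ Iio t0 ∪ {t0} := by
        intro w hw
        rcases lt_or_eq_of_le (mem_Iic.1 hw) with hlt' | heq'
        · exact Or.inl hlt'
        · exact Or.inr (by simp [heq'])
      refine le_trans (measure_mono this) (le_trans (measure_union_le _ _) ?_)
      rw [hatom t0, add_zero]
    have h3 : ENNReal.ofReal u ≤ μ (Iio t0) := le_trans h1 h2
    rw [ENNReal.ofReal_le_iff_le_toReal (measure_ne_top μ _)] at h3
    rw [hh_def]
    exact h3
  exact ⟨t0, le_antisymm hle hge⟩

end H

section Main

variable {G : Type*} [Group G] (φ : G →* (ℝ ≃o ℝ)) (x : ℝ)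

def Orb : Set ℝ := {y : ℝ | ∃ g : G, φ g x = y}

lemma orb_inv (g : G) {y : ℝ} (hy : y ∈ Orb φ x) : φ g y ∈ Orb φ x := by
  obtain ⟨g', rfl⟩ := hy
  exact ⟨g * g', by rw [map_mul]; rfl⟩

lemma closure_orb_inv (g : G) {y : ℝ} (hy : y ∈ closure (Orb φ x)) :
    φ g y ∈ closure (Orb φ x) := by
  have h1 : φ g y ∈ (φ g).toHomeomorph '' closure (Orb φ x) := ⟨y, hy, rfl⟩
  rw [Homeomorph.image_closure] at h1
  have h2 : ((φ g).toHomeomorph '' Orb φ x : Set ℝ) ⊆ Orb φ x := by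
    rintro w ⟨v, hv, rfl⟩
    exact orb_inv φ x g hv
  exact closure_mono h2 h1

lemma cond_inv (g : G) {y : ℝ} (hy : y ∈ condSet (closure (Orb φ x))) :
    φ g y ∈ condSet (closure (Orb φ x)) := by
  intro a b ha hb hcnt
  set e := φ g
  have ha' : e.symm a < y := by
    rw [← e.symm_apply_apply y]; exact e.symm.strictMono ha
  have hb' : y < e.symm b := by
    rw [← e.symm_apply_apply y]; exact e.symm.strictMono hb
  refine hy _ _ ha' hb' ?_
  have hsub : Ioo (e.symm a) (e.symm b) ∩ closure (Orb φ x) ⊆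
      e.symm '' (Ioo a b ∩ closure (Orb φ x)) := by
    rintro w ⟨⟨hw1, hw2⟩, hw3⟩
    refine ⟨e w, ⟨⟨?_, ?_⟩, closure_orb_inv φ x g hw3⟩, e.symm_apply_apply w⟩
    · have h3 := e.strictMono hw1
      rwa [e.apply_symm_apply] at h3
    · have h3 := e.strictMono hw2
      rwa [e.apply_symm_apply] at h3
  exact (hcnt.image e.symm).mono hsub

end Main

theorem main_trans {G : Type*} [Group G] (φ : G →* (ℝ ≃o ℝ)) (x : ℝ)
    (hunc : ¬ (closure (Orb φ x)).Countable) :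
    ∃ θ : G →* (ℝ ≃o ℝ), IsTopTransitive θ := by
  classical
  set C := closure (Orb φ x) with hCdef
  set K := condSet C with hKdef
  obtain ⟨μ, hfin, hatom, hP2, hP3⟩ := exists_global_measure C isClosed_closure hunc
  haveI := hfin
  set M := MM μ with hMdef
  set h := hh μ with hhdef
  -- some orbit application facts
  have happmul : ∀ (a b : G) (y : ℝ), φ a (φ b y) = φ (a * b) y := by
    intro a b y
    rw [map_mul]
    rfl
  have hinvapp : ∀ (g : G) (y : ℝ), φ g⁻¹ (φ g y) = y := by
    intro g y
    rw [happmul, inv_mul_cancel, map_one]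
    rfl
  -- K is nonempty, so M > 0
  have hMpos : 0 < M := by
    obtain ⟨z, hzC, hzcond⟩ := exists_cond_point hunc
    have hzK : z ∈ K := hzcond
    have hpos : 0 < μ (Ioo (z-1) (z+1)) :=
      hP2 _ _ ⟨z, ⟨by linarith, by linarith⟩, hzK⟩
    have : 0 < μ univ := lt_of_lt_of_le hpos (measure_mono (subset_univ _))
    exact ENNReal.toReal_pos (ne_of_gt this) (measure_ne_top μ _)
  -- h equality iff no condensation point in between
  have hKiff : ∀ s t : ℝ, s < t → (h s = h t ↔ ¬(Ioo s t ∩ K).Nonempty) := by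
    intro s t hst
    constructor
    · intro heq hne
      have h0 := measure_Ioo_zero_of_hh_eq μ hatom hst heq
      exact absurd (hP2 _ _ hne) (by rw [h0]; exact lt_irrefl 0)
    · intro hne
      refine hh_eq_of_measure_Ioo_zero μ hatom hst ?_
      by_contra h0
      exact hne (hP3 _ _ (pos_iff_ne_zero.2 h0))
  -- equivariance
  have hequi : ∀ (g : G) (s t : ℝ), h s = h t → h (φ g s) = h (φ g t) := by
    have key : ∀ (g : G) (s t : ℝ), s < t → h s = h t → h (φ g s) = h (φ g t) := by
      intro g s t hst heq
      have hlt : φ g s < φ g t := (φ g).strictMono hst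
      rw [hKiff _ _ hlt]
      rw [hKiff _ _ hst] at heq
      rintro ⟨k, hk1, hk2⟩
      refine heq ⟨φ g⁻¹ k, ⟨?_, ?_⟩, cond_inv φ x g⁻¹ hk2⟩
      · have := (φ g⁻¹).strictMono hk1.1
        rwa [hinvapp] at this
      · have := (φ g⁻¹).strictMono hk1.2
        rwa [hinvapp] at this
    intro g s t heq
    rcases lt_trichotomy s t with hst | hst | hst
    · exact key g s t hst heq
    · rw [hst]
    · exact (key g t s hst heq.symm).symm
  -- range preservation
  have hrange : ∀ (g : G) (t : ℝ), 0 < h t → h t < M → 0 < h (φ g t) ∧ h (φ g t) < M := by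
    intro g t h0 hM
    have hA : ∃ k ∈ K, k < t := by
      have hpos : 0 < μ (Iio t) := by
        by_contra hc
        push_neg at hc
        have : μ (Iio t) = 0 := le_antisymm hc zero_le
        rw [hhdef, hh_def μ t, this] at h0
        simp at h0
      have hIU : Iio t = ⋃ n : ℕ, Ioo (t - ((n:ℝ)+1)) t := by
        ext s
        simp only [mem_iUnion, mem_Ioo, mem_Iio]
        constructor
        · intro hs
          obtain ⟨n, hn⟩ := exists_nat_gt (t - s)
          exact ⟨n, by linarith, hs⟩
        · rintro ⟨n, _, hs⟩
          exact hs
      have : ∃ n : ℕ, μ (Ioo (t - ((n:ℝ)+1)) t) ≠ 0 := by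
        by_contra hc
        push_neg at hc
        rw [hIU, measure_iUnion_null_iff.2 hc] at hpos
        exact lt_irrefl _ hpos
      obtain ⟨n, hn⟩ := this
      obtain ⟨k, hk1, hk2⟩ := hP3 _ _ (pos_iff_ne_zero.2 hn)
      exact ⟨k, hk2, hk1.2⟩
    have hB : ∃ k ∈ K, t < k := by
      have h1 : μ (Iio t) < μ univ := by
        by_contra hc
        push_neg at hc
        have : μ (Iio t) = μ univ := le_antisymm (measure_mono (subset_univ _)) hc
        rw [hhdef, hh_def μ t, this, hMdef, MM_def] at hM
        exact lt_irrefl _ hM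
      have hIoipos : μ (Ioi t) ≠ 0 := by
        intro hc
        have hsplit : μ univ ≤ μ (Iio t) + μ (Iic t \ Iio t) + μ (Ioi t) := by
          have : univ = Iio t ∪ (Iic t \ Iio t) ∪ Ioi t := by
            ext w
            simp only [mem_univ, mem_union, mem_Iio, mem_Ioi, mem_diff, mem_Iic, true_iff]
            rcases lt_trichotomy w t with hw | hw | hw
            · exact Or.inl (Or.inl hw)
            · exact Or.inl (Or.inr ⟨hw.le, by linarith⟩)
            · exact Or.inr hw
          calc μ univ ≤ μ (Iio t ∪ (Iic t \ Iio t) ∪ Ioi t) := by rw [← this]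
            _ ≤ _ := le_trans (measure_union_le _ _)
                (by exact add_le_add_left (measure_union_le _ _) _)
        have hd : Iic t \ Iio t ⊆ {t} := by
          intro w hw
          simp only [mem_diff, mem_Iic, mem_Iio, not_lt] at hw
          exact le_antisymm hw.1 hw.2
        have : μ univ ≤ μ (Iio t) := by
          calc μ univ ≤ μ (Iio t) + μ (Iic t \ Iio t) + μ (Ioi t) := hsplit
            _ ≤ μ (Iio t) + μ {t} + μ (Ioi t) :=
                add_le_add_left (add_le_add_right (measure_mono hd) _) _
            _ = μ (Iio t) := by rw [hatom, hc, add_zero, add_zero]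
        exact absurd h1 (not_lt.2 this)
      have hIU : Ioi t = ⋃ n : ℕ, Ioo t (t + ((n:ℝ)+1)) := by
        ext s
        simp only [mem_iUnion, mem_Ioo, mem_Ioi]
        constructor
        · intro hs
          obtain ⟨n, hn⟩ := exists_nat_gt (s - t)
          exact ⟨n, hs, by linarith⟩
        · rintro ⟨n, hs, _⟩
          exact hs
      have : ∃ n : ℕ, μ (Ioo t (t + ((n:ℝ)+1))) ≠ 0 := by
        by_contra hc
        push_neg at hc
        rw [hIU] at hIoipos
        exact hIoipos (measure_iUnion_null_iff.2 hc)
      obtain ⟨n, hn⟩ := this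
      obtain ⟨k, hk1, hk2⟩ := hP3 _ _ (pos_iff_ne_zero.2 hn)
      exact ⟨k, hk2, hk1.1⟩
    constructor
    · obtain ⟨k, hkK, hkt⟩ := hA
      have hk' : φ g k ∈ K := cond_inv φ x g hkK
      have hlt : φ g k < φ g t := (φ g).strictMono hkt
      have hpos : 0 < μ (Ioo (φ g k - 1) (φ g t)) :=
        hP2 _ _ ⟨φ g k, ⟨by linarith, hlt⟩, hk'⟩
      have : 0 < μ (Iio (φ g t)) :=
        lt_of_lt_of_le hpos (measure_mono (fun w hw => hw.2))
      rw [hhdef, hh_def μ _]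
      exact ENNReal.toReal_pos (ne_of_gt this) (measure_ne_top μ _)
    · obtain ⟨k, hkK, hkt⟩ := hB
      have hk' : φ g k ∈ K := cond_inv φ x g hkK
      have hlt : φ g t < φ g k := (φ g).strictMono hkt
      have hpos : 0 < μ (Ioo (φ g t) (φ g k + 1)) :=
        hP2 _ _ ⟨φ g k, ⟨hlt, by linarith⟩, hk'⟩
      calc h (φ g t) < h (φ g k + 1) := hh_lt_of_measure_pos μ (by linarith) hpos
        _ ≤ M := hh_le_MM μ _
  -- density of the image of the orbit
  have hdense : ∀ u v : ℝ, 0 < u → v < M → u < v →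
      ∃ g : G, u < h (φ g x) ∧ h (φ g x) < v := by
    intro u v hu hv huv
    set w1 := (2*u+v)/3 with hw1def
    set w2 := (u+2*v)/3 with hw2def
    have hw1 : 0 < w1 := by rw [hw1def]; linarith
    have hw2 : w2 < M := by rw [hw2def]; linarith
    have hw12 : w1 < w2 := by rw [hw1def, hw2def]; linarith
    have hw1M : w1 < M := by linarith
    have hw20 : 0 < w2 := by linarith
    obtain ⟨t1, ht1⟩ := hh_surj μ hatom hw1 hw1M
    obtain ⟨t2, ht2⟩ := hh_surj μ hatom hw20 hw2
    have ht12 : t1 < t2 := by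
      by_contra hc
      push_neg at hc
      have := hh_mono μ hc
      rw [ht1, ht2] at this
      exact absurd hw12 (not_lt.2 this)
    have hne : μ (Ioo t1 t2) ≠ 0 := by
      intro hc
      have := hh_eq_of_measure_Ioo_zero μ hatom ht12 hc
      rw [ht1, ht2] at this
      exact absurd this (ne_of_lt hw12)
    obtain ⟨k, hk1, hk2⟩ := hP3 _ _ (pos_iff_ne_zero.2 hne)
    have hkC : k ∈ C := cond_in_closure isClosed_closure hk2
    rw [hCdef, mem_closure_iff] at hkC
    obtain ⟨y, hy1, hy2⟩ := hkC (Ioo t1 t2) isOpen_Ioo hk1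
    obtain ⟨g, hg⟩ := hy2
    refine ⟨g, ?_, ?_⟩
    · have := hh_mono μ (le_of_lt hy1.1)
      rw [ht1, ← hg] at this
      rw [hw1def] at this
      linarith
    · have := hh_mono μ (le_of_lt hy1.2)
      rw [ht2, ← hg] at this
      rw [hw2def] at this
      linarith
  -- the order isomorphism between ℝ and Ioo 0 M
  have hM2 : (0:ℝ) < M/2 := by linarith
  let aff : (Set.Ioo (-1:ℝ) 1) ≃o (Set.Ioo (0:ℝ) M) :=
  { toFun := fun u => ⟨M/2 * (u.1 + 1), by
      obtain ⟨hu1, hu2⟩ := u.2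
      constructor
      · nlinarith
      · nlinarith⟩
    invFun := fun v => ⟨2 * v.1 / M - 1, by
      obtain ⟨hv1, hv2⟩ := v.2
      constructor
      · have : 0 < 2 * v.1 / M := by positivity
        linarith
      · have : 2 * v.1 / M < 2 := by
          rw [div_lt_iff₀ (by linarith)]
          linarith
        linarith⟩
    left_inv := fun u => Subtype.ext (by
      simp only
      field_simp
      ring)
    right_inv := fun v => Subtype.ext (by
      simp only
      field_simp
      ring)
    map_rel_iff' := by
      intro u v
      simp only [Equiv.coe_fn_mk, Subtype.mk_le_mk, ← Subtype.coe_le_coe]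
      constructor
      · intro hle
        nlinarith
      · intro hle
        nlinarith }
  let e : ℝ ≃o (Set.Ioo (0:ℝ) M) := (orderIsoIooNegOneOne ℝ).trans aff
  -- the collapsed action on (0, M)
  let pick : ℝ → ℝ := fun u =>
    if hu : 0 < u ∧ u < M then Classical.choose (hh_surj μ hatom hu.1 hu.2) else 0
  have hpick : ∀ u : ℝ, 0 < u → u < M → h (pick u) = u := by
    intro u h1 h2
    simp only [pick, dif_pos (And.intro h1 h2)]
    exact Classical.choose_spec (hh_surj μ hatom h1 h2)
  let ψ : G → ℝ → ℝ := fun g u => h (φ g (pick u))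
  have hψh : ∀ (g : G) (t : ℝ), 0 < h t → h t < M → ψ g (h t) = h (φ g t) := by
    intro g t h1 h2
    exact hequi g (pick (h t)) t (hpick (h t) h1 h2)
  have hψmem : ∀ (g : G) (u : ℝ), 0 < u → u < M → 0 < ψ g u ∧ ψ g u < M := by
    intro g u h1 h2
    have := hrange g (pick u)
    rw [hpick u h1 h2] at this
    exact this h1 h2
  have hψcomp : ∀ (a b : G) (u : ℝ), 0 < u → u < M → ψ a (ψ b u) = ψ (a * b) u := by
    intro a b u h1 h2
    have hmem := hψmem b u h1 h2
    have hpb : ψ b u = h (φ b (pick u)) := rfl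
    have hmem' : 0 < h (φ b (pick u)) ∧ h (φ b (pick u)) < M := by
      rw [← hpb]; exact hmem
    calc ψ a (ψ b u) = ψ a (h (φ b (pick u))) := rfl
      _ = h (φ a (φ b (pick u))) := hψh a _ hmem'.1 hmem'.2
      _ = h (φ (a * b) (pick u)) := by rw [happmul]
      _ = ψ (a * b) u := rfl
  have hψone : ∀ u : ℝ, 0 < u → u < M → ψ 1 u = u := by
    intro u h1 h2
    have : φ (1 : G) (pick u) = pick u := by
      rw [map_one]
      rfl
    calc ψ 1 u = h (φ 1 (pick u)) := rfl
      _ = h (pick u) := by rw [this]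
      _ = u := hpick u h1 h2
  have hψmono : ∀ (g : G) (u v : ℝ), 0 < u → u < M → 0 < v → v < M → u ≤ v →
      ψ g u ≤ ψ g v := by
    intro g u v hu1 hu2 hv1 hv2 huv
    rcases le_or_gt (pick u) (pick v) with hp | hp
    · exact hh_mono μ ((φ g).monotone hp)
    · have : h (pick v) ≤ h (pick u) := hh_mono μ hp.le
      rw [hpick u hu1 hu2, hpick v hv1 hv2] at this
      have huv' : u = v := le_antisymm huv this
      subst huv'
      exact le_rfl
  have hψstrict : ∀ (g : G) (u v : ℝ), 0 < u → u < M → 0 < v → v < M → u < v →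
      ψ g u < ψ g v := by
    intro g u v hu1 hu2 hv1 hv2 huv
    rcases lt_or_eq_of_le (hψmono g u v hu1 hu2 hv1 hv2 huv.le) with hlt | heq
    · exact hlt
    · exfalso
      have hmu := hψmem g u hu1 hu2
      have hmv := hψmem g v hv1 hv2
      have h1 : ψ g⁻¹ (ψ g u) = u := by
        rw [hψcomp g⁻¹ g u hu1 hu2, inv_mul_cancel]
        exact hψone u hu1 hu2
      have h2 : ψ g⁻¹ (ψ g v) = v := by
        rw [hψcomp g⁻¹ g v hv1 hv2, inv_mul_cancel]
        exact hψone v hv1 hv2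
      rw [← h1, ← h2, heq] at huv
      exact lt_irrefl _ huv
  -- package as order isomorphisms of Ioo 0 M
  let Ψ : G → (Set.Ioo (0:ℝ) M ≃o Set.Ioo (0:ℝ) M) := fun g =>
  { toFun := fun u => ⟨ψ g u.1, (hψmem g u.1 u.2.1 u.2.2).1, (hψmem g u.1 u.2.1 u.2.2).2⟩
    invFun := fun u => ⟨ψ g⁻¹ u.1, (hψmem g⁻¹ u.1 u.2.1 u.2.2).1,
      (hψmem g⁻¹ u.1 u.2.1 u.2.2).2⟩
    left_inv := fun u => Subtype.ext (by
      simp only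
      rw [hψcomp g⁻¹ g u.1 u.2.1 u.2.2, inv_mul_cancel]
      exact hψone u.1 u.2.1 u.2.2)
    right_inv := fun u => Subtype.ext (by
      simp only
      rw [hψcomp g g⁻¹ u.1 u.2.1 u.2.2, mul_inv_cancel]
      exact hψone u.1 u.2.1 u.2.2)
    map_rel_iff' := by
      intro u v
      simp only [Equiv.coe_fn_mk, Subtype.mk_le_mk]
      constructor
      · intro hle
        by_contra hc
        push_neg at hc
        have := hψstrict g v.1 u.1 v.2.1 v.2.2 u.2.1 u.2.2 hc
        exact absurd hle (not_le.2 this)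
      · intro hle
        exact hψmono g u.1 v.1 u.2.1 u.2.2 v.2.1 v.2.2 hle }
  have hΨapp : ∀ (g : G) (u : Set.Ioo (0:ℝ) M), ((Ψ g u : Set.Ioo (0:ℝ) M) : ℝ) = ψ g u.1 :=
    fun g u => rfl
  let Θfun : G → (ℝ ≃o ℝ) := fun g => (e.trans (Ψ g)).trans e.symm
  have hΘmul : ∀ a b : G, Θfun (a * b) = Θfun a * Θfun b := by
    intro a b
    refine RelIso.ext (fun r => ?_)
    show e.symm (Ψ (a*b) (e r)) = e.symm (Ψ a (e (e.symm (Ψ b (e r)))))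
    rw [OrderIso.apply_symm_apply]
    congr 1
    apply Subtype.ext
    rw [hΨapp, hΨapp, hΨapp]
    exact (hψcomp a b (e r).1 (e r).2.1 (e r).2.2).symm
  have hΘcomp : ∀ (g : G) (t : ℝ) (h1 : 0 < h t) (h2 : h t < M),
      Θfun g (e.symm ⟨h t, h1, h2⟩) =
        e.symm ⟨h (φ g t), (hrange g t h1 h2).1, (hrange g t h1 h2).2⟩ := by
    intro g t h1 h2
    show e.symm (Ψ g (e (e.symm ⟨h t, h1, h2⟩))) = _
    rw [OrderIso.apply_symm_apply]
    congr 1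
    apply Subtype.ext
    rw [hΨapp]
    exact hψh g t h1 h2
  set Θ : G →* (ℝ ≃o ℝ) := MonoidHom.mk' Θfun hΘmul with hΘdef
  refine ⟨Θ, ?_⟩
  obtain ⟨g₀, hg₀1, hg₀2⟩ := hdense (M/3) (M/2) (by linarith) (by linarith) (by linarith)
  set z := φ g₀ x with hzdef
  have hz1 : 0 < h z := by
    have : (0:ℝ) < M/3 := by linarith
    linarith
  have hz2 : h z < M := by linarith
  set p0 : ℝ := e.symm ⟨h z, hz1, hz2⟩ with hp0
  have horbit : ∀ O : Set ℝ, IsOpen O → O.Nonempty → ∃ g : G, Θfun g p0 ∈ O := by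
    intro O hO hOne
    obtain ⟨r, hr⟩ := hOne
    obtain ⟨ε, hε, hball⟩ := Metric.isOpen_iff.1 hO r hr
    rw [Real.ball_eq_Ioo] at hball
    have hrlt : r - ε < r + ε := by linarith
    have helt : e (r-ε) < e (r+ε) := e.strictMono hrlt
    obtain ⟨g', hg'1, hg'2⟩ := hdense ((e (r-ε)).1) ((e (r+ε)).1)
      (e (r-ε)).2.1 (e (r+ε)).2.2 (Subtype.coe_lt_coe.2 helt)
    refine ⟨g' * g₀⁻¹, ?_⟩
    have happz : φ (g' * g₀⁻¹) z = φ g' x := by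
      rw [hzdef, happmul]
      have : g' * g₀⁻¹ * g₀ = g' := by group
      rw [this]
    have hcomp := hΘcomp (g' * g₀⁻¹) z hz1 hz2
    rw [hp0] at *
    rw [hcomp]
    have hval : h (φ (g' * g₀⁻¹) z) = h (φ g' x) := by rw [happz]
    have hw1 : (e (r-ε)).1 < h (φ (g' * g₀⁻¹) z) := by rw [hval]; exact hg'1
    have hw2 : h (φ (g' * g₀⁻¹) z) < (e (r+ε)).1 := by rw [hval]; exact hg'2
    apply hball
    constructor
    · have hlt : e (r-ε) < (⟨h (φ (g' * g₀⁻¹) z), (hrange (g' * g₀⁻¹) z hz1 hz2).1,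
          (hrange (g' * g₀⁻¹) z hz1 hz2).2⟩ : Set.Ioo (0:ℝ) M) := Subtype.coe_lt_coe.1 hw1
      have h2 := e.symm.strictMono hlt
      rwa [OrderIso.symm_apply_apply] at h2
    · have hlt : (⟨h (φ (g' * g₀⁻¹) z), (hrange (g' * g₀⁻¹) z hz1 hz2).1,
          (hrange (g' * g₀⁻¹) z hz1 hz2).2⟩ : Set.Ioo (0:ℝ) M) < e (r+ε) :=
        Subtype.coe_lt_coe.1 hw2
      have h2 := e.symm.strictMono hlt
      rwa [OrderIso.symm_apply_apply] at h2
  intro U V hU hV hUne hVne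
  obtain ⟨g1, hg1⟩ := horbit U hU hUne
  obtain ⟨g2, hg2⟩ := horbit V hV hVne
  refine ⟨g2 * g1⁻¹, ⟨Θfun g2 p0, ⟨Θfun g1 p0, hg1, ?_⟩, hg2⟩⟩
  have hcoe : ∀ (g : G) (w : ℝ), Θ g w = Θfun g w := fun g w => rfl
  rw [hcoe]
  have h1 : Θfun (g2 * g1⁻¹) (Θfun g1 p0) = Θfun (g2 * g1⁻¹ * g1) p0 := by
    rw [hΘmul (g2 * g1⁻¹) g1]
    rfl
  rw [h1]
  have : g2 * g1⁻¹ * g1 = g2 := by group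
  rw [this]


/-- If a countable group `G` has no topologically transitive orientation-preserving action
on `ℝ`, then for every orientation-preserving action of `G` on `ℝ` and every `x ∈ ℝ`, the
orbit closure of `x` is countable. -/
theorem stmt_8 (G : Type*) [Group G] [Countable G]
    (hno : ∀ φ : G →* (ℝ ≃o ℝ), ¬ IsTopTransitive φ) :
    ∀ (φ : G →* (ℝ ≃o ℝ)) (x : ℝ),
      (closure {y : ℝ | ∃ g : G, φ g x = y}).Countable := by
  intro φ x
  by_contra hunc
  obtain ⟨θ, hθ⟩ := main_trans φ x hunc
  exact hno θ hθ
end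

section
/- For every group G, either G admits a topologically transitive action on ℝ by orientation-preserving homeomorphisms, or every orientation-preserving action of G on ℝ has a wandering interval. -/
/-- `(a, b)` is a wandering interval of `φ` if every group element either restricts to the
identity on `(a, b)` or maps `(a, b)` off itself. -/
def HasWanderingInterval {G : Type*} [Group G] (φ : G →* (ℝ ≃o ℝ)) : Prop :=
  ∃ a b : ℝ, a < b ∧ ∀ g : G,
    (∀ x ∈ Set.Ioo a b, φ g x = x) ∨ (φ g '' Set.Ioo a b) ∩ Set.Ioo a b = ∅

open Set

theorem IsPreconnected.apply_eq_self_of_returns_fixed {X : Type*} [TopologicalSpace X]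
    [T2Space X] {f : X → X} (hf : Continuous f) {s : Set X} (hs : IsPreconnected s)
    (hso : IsOpen s) (hfix : ∀ z ∈ s, f z ∈ s → f z = z) (hne : (s ∩ f ⁻¹' s).Nonempty) :
    ∀ z ∈ s, f z = z := by
  have hclosure : closure (s ∩ f ⁻¹' s) ⊆ {z | f z = z} :=
    closure_minimal (fun z hz => hfix z hz.1 hz.2) (isClosed_eq hf continuous_id)
  -- the returning points are relatively closed in `s`, since fixed points form a closed set
  have hsub : s ⊆ f ⁻¹' s := hs.subset_of_closure_inter_subset (hso.preimage hf) hne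
    fun z hz => by
      have hz' : f z = z := hclosure (hso.inter_closure ⟨hz.2, hz.1⟩)
      rw [mem_preimage, hz']
      exact hz.2
  exact fun z hz => hfix z hz (hsub hz)

theorem exists_countable_orderDense {X : Type*} [LinearOrder X] [TopologicalSpace X]
    [OrderClosedTopology X] [SecondCountableTopology X] (S : Set X) [DenselyOrdered S] :
    ∃ D : Set S, D.Countable ∧ ∀ a b : S, a < b → ∃ d ∈ D, a < d ∧ d < b := by
  obtain ⟨D, hD, hDdense⟩ := TopologicalSpace.exists_countable_dense S
  refine ⟨D, hD, fun a b hab => ?_⟩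
  obtain ⟨c, hc⟩ := exists_between hab
  exact hDdense.exists_mem_open (isOpen_Ioo.preimage continuous_subtype_val) ⟨c, hc⟩

theorem exists_strictMono_denseRange {α : Type*} [LinearOrder α] [NoMinOrder α] [NoMaxOrder α]
    [Nonempty α] {D : Set α} (hD : D.Countable)
    (hdense : ∀ a b : α, a < b → ∃ d ∈ D, a < d ∧ d < b) :
    ∃ h : α → ℝ, StrictMono h ∧ DenseRange h := by
  have : Countable D := hD.to_subtype
  have : DenselyOrdered D := ⟨fun a b hab =>
    let ⟨d, hd, had, hdb⟩ := hdense a b hab; ⟨⟨d, hd⟩, had, hdb⟩⟩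
  have : NoMaxOrder D := ⟨fun a =>
    let ⟨b, hab⟩ := exists_gt (a : α); let ⟨d, hd, had, _⟩ := hdense a b hab; ⟨⟨d, hd⟩, had⟩⟩
  have : NoMinOrder D := ⟨fun a =>
    let ⟨b, hba⟩ := exists_lt (a : α); let ⟨d, hd, _, hda⟩ := hdense b a hba; ⟨⟨d, hd⟩, hda⟩⟩
  have : Nonempty D := by
    obtain ⟨a⟩ := ‹Nonempty α›
    obtain ⟨b, hab⟩ := exists_gt a
    obtain ⟨d, hd, -⟩ := hdense a b hab
    exact ⟨⟨d, hd⟩⟩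
  obtain ⟨e⟩ := Order.iso_of_countable_dense ℚ D
  set cut : α → Set ℝ := fun a => (↑) '' {q : ℚ | (e q : α) < a}
  have hbdd (a : α) : BddAbove (cut a) := by
    obtain ⟨b, hab⟩ := exists_gt a
    obtain ⟨d, hd, had, -⟩ := hdense a b hab
    refine ⟨e.symm ⟨d, hd⟩, ?_⟩
    rintro _ ⟨q, hq, rfl⟩
    exact_mod_cast (e.lt_symm_apply.2 (show e q < ⟨d, hd⟩ from hq.trans had)).le
  have hne (a : α) : (cut a).Nonempty := by
    obtain ⟨b, hba⟩ := exists_lt a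
    obtain ⟨d, hd, -, hda⟩ := hdense b a hba
    exact ⟨_, e.symm ⟨d, hd⟩, by simpa using hda, rfl⟩
  have hmono : Monotone fun a => sSup (cut a) := fun a b hab =>
    csSup_le_csSup (hbdd b) (hne a) (image_mono fun q hq => lt_of_lt_of_le hq hab)
  have hcut (q : ℚ) : sSup (cut (e q)) = q := by
    refine le_antisymm (csSup_le (hne _) ?_) (le_of_forall_lt fun c hc => ?_)
    · rintro _ ⟨r, hr, rfl⟩
      exact_mod_cast (e.lt_iff_lt.1 hr).le
    · obtain ⟨r, hcr, hrq⟩ := exists_rat_btwn hc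
      exact hcr.trans_le (le_csSup (hbdd _) ⟨r, e.lt_iff_lt.2 (by exact_mod_cast hrq), rfl⟩)
  refine ⟨fun a => sSup (cut a), fun a b hab => ?_, ?_⟩
  · obtain ⟨d₁, hd₁, had₁, hd₁b⟩ := hdense a b hab
    obtain ⟨d₂, hd₂, hd₁d₂, hd₂b⟩ := hdense d₁ b hd₁b
    have h₁ := hcut (e.symm ⟨d₁, hd₁⟩)
    have h₂ := hcut (e.symm ⟨d₂, hd₂⟩)
    simp only [OrderIso.apply_symm_apply] at h₁ h₂
    calc sSup (cut a) ≤ sSup (cut d₁) := hmono had₁.le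
      _ < sSup (cut d₂) := by
        rw [h₁, h₂]
        exact_mod_cast e.symm.lt_iff_lt.2 (show (⟨d₁, hd₁⟩ : D) < ⟨d₂, hd₂⟩ from hd₁d₂)
      _ ≤ sSup (cut b) := hmono hd₂b.le
  · exact Rat.denseRange_cast.mono (range_subset_iff.2 fun q => ⟨e q, hcut q⟩)

theorem eq_id_of_monotone_of_eqOn_dense {F : ℝ → ℝ} (hF : Monotone F) {s : Set ℝ} (hs : Dense s)
    (hFs : ∀ t ∈ s, F t = t) : F = id := by
  funext t
  rcases lt_trichotomy (F t) t with hlt | heq | hlt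
  · obtain ⟨u, hus, hFtu, hut⟩ := hs.exists_between hlt
    linarith [hFs u hus ▸ hF hut.le]
  · exact heq
  · obtain ⟨u, hus, htu, huFt⟩ := hs.exists_between hlt
    linarith [hFs u hus ▸ hF htu.le]

theorem orderIso_ext_of_denseRange {α : Type*} {h : α → ℝ} (hd : DenseRange h) {A B : ℝ ≃o ℝ}
    (hAB : ∀ y, A (h y) = B (h y)) : A = B :=
  DFunLike.coe_injective (hd.equalizer A.continuous B.continuous (funext hAB))

section Extension

variable {α : Type*} [LinearOrder α] {h : α → ℝ}

noncomputable def extendAlong (h : α → ℝ) (f : α → α) (t : ℝ) : ℝ :=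
  sSup ((h ∘ f) '' {y | h y < t})

variable (hh : StrictMono h) (hd : DenseRange h) (f : α ≃o α)
include hh hd

theorem bddAbove_extendAlong_set (t : ℝ) : BddAbove ((h ∘ f) '' {y | h y < t}) := by
  obtain ⟨_, ⟨y', rfl⟩, hty', -⟩ := hd.exists_between (lt_add_one t)
  refine ⟨h (f y'), ?_⟩
  rintro _ ⟨y, hy, rfl⟩
  exact hh.monotone (f.monotone (hh.lt_iff_lt.1 (lt_trans hy hty')).le)

omit hh in
theorem nonempty_extendAlong_set (t : ℝ) : ((h ∘ f) '' {y | h y < t}).Nonempty := by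
  obtain ⟨_, ⟨y, rfl⟩, -, hyt⟩ := hd.exists_between (sub_one_lt t)
  exact ⟨_, y, hyt, rfl⟩

theorem monotone_extendAlong : Monotone (extendAlong h f) := fun t t' htt' =>
  csSup_le_csSup (bddAbove_extendAlong_set hh hd f t') (nonempty_extendAlong_set hd f t)
    (image_mono fun _ hy => lt_of_lt_of_le hy htt')

theorem extendAlong_apply (y : α) : extendAlong h f (h y) = h (f y) := by
  refine le_antisymm (csSup_le (nonempty_extendAlong_set hd f _) ?_)
    (le_of_forall_lt fun c hc => ?_)
  · rintro _ ⟨z, hz, rfl⟩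
    exact hh.monotone (f.monotone (hh.lt_iff_lt.1 hz).le)
  · obtain ⟨_, ⟨w, rfl⟩, hcw, hw⟩ := hd.exists_between hc
    refine hcw.trans_le (le_csSup (bddAbove_extendAlong_set hh hd f _) ⟨f.symm w, ?_, by simp⟩)
    exact hh (f.symm_apply_lt.2 (hh.lt_iff_lt.1 hw))

theorem exists_orderIso_semiconj : ∃ F : ℝ ≃o ℝ, ∀ y, F (h y) = h (f y) := by
  have hinv (f g : α ≃o α) (hfg : ∀ y, f (g y) = y) :
      extendAlong h f ∘ extendAlong h g = id :=
    eq_id_of_monotone_of_eqOn_dense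
      ((monotone_extendAlong hh hd f).comp (monotone_extendAlong hh hd g)) hd
      (by rintro _ ⟨y, rfl⟩; simp [extendAlong_apply hh hd, hfg])
  refine ⟨Equiv.toOrderIso ⟨extendAlong h f, extendAlong h f.symm, congrFun (hinv _ _ (by simp)),
    congrFun (hinv _ _ (by simp))⟩ (monotone_extendAlong hh hd f)
    (monotone_extendAlong hh hd f.symm), extendAlong_apply hh hd f⟩

omit f

theorem exists_monoidHom_semiconj {G : Type*} [Group G] (ρ : G →* (α ≃o α)) :
    ∃ ψ : G →* (ℝ ≃o ℝ), ∀ g y, ψ g (h y) = h (ρ g y) := by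
  choose F hF using fun g => exists_orderIso_semiconj hh hd (ρ g)
  refine ⟨{ toFun := F, map_one' := ?_, map_mul' := fun a b => ?_ }, hF⟩ <;>
    refine orderIso_ext_of_denseRange hd fun y => ?_ <;> simp [hF]

end Extension

theorem isTopTransitive_of_denseRange_orbit {G : Type*} [Group G] (ψ : G →* (ℝ ≃o ℝ)) {x : ℝ}
    (hx : DenseRange fun g => ψ g x) : IsTopTransitive ψ := by
  intro U V hU hV hUne hVne
  obtain ⟨a, ha⟩ := hx.exists_mem_open hU hUne
  obtain ⟨b, hb⟩ := hx.exists_mem_open hV hVne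
  exact ⟨b * a⁻¹, _, ⟨_, ha, rfl⟩, by simpa using hb⟩

namespace RealAction

variable {G : Type*} [Group G] (φ : G →* (ℝ ≃o ℝ))

theorem hasWanderingInterval_of_rigid {c d : ℝ} (hcd : c < d)
    (hrigid : ∀ g, ∀ z ∈ Ioo c d, φ g z ∈ Ioo c d → φ g z = z) : HasWanderingInterval φ := by
  refine ⟨c, d, hcd, fun g => ?_⟩
  rcases (φ g '' Ioo c d ∩ Ioo c d).eq_empty_or_nonempty with hempty | hne
  · exact Or.inr hempty
  · exact Or.inl (isPreconnected_Ioo.apply_eq_self_of_returns_fixed (φ g).continuous isOpen_Ioo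
      (hrigid g) (image_inter_nonempty_iff.1 hne))

def noSmallRightShift (ε : ℝ) : Set ℝ := {z | ∀ g, φ g z - z ∉ Ioo 0 ε}

theorem isClosed_noSmallRightShift (ε : ℝ) : IsClosed (noSmallRightShift φ ε) := by
  simp only [noSmallRightShift, ofPred_forall]
  exact isClosed_iInter fun g =>
    (isOpen_Ioo.preimage ((φ g).continuous.sub continuous_id)).isClosed_compl

theorem rigid_of_subset_noSmallRightShift {c d ε : ℝ}
    (hsub : Ioo c d ⊆ noSmallRightShift φ ε) (hlen : d - c ≤ ε) (g : G) :
    ∀ z ∈ Ioo c d, φ g z ∈ Ioo c d → φ g z = z := by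
  intro z hz hgz
  rcases lt_trichotomy (φ g z) z with hlt | heq | hgt
  · have hback : φ g⁻¹ (φ g z) = z := by simp
    exact absurd ⟨by linarith, by linarith [hz.1, hz.2, hgz.1, hgz.2]⟩ (hback ▸ hsub hgz g⁻¹)
  · exact heq
  · exact absurd ⟨by linarith, by linarith [hz.1, hz.2, hgz.1, hgz.2]⟩ (hsub hz g)

theorem exists_rigid_Ioo (hcover : ∀ x, ∃ n : ℕ, x ∈ noSmallRightShift φ (1 / (n + 1))) :
    ∃ c d, c < d ∧ ∀ g, ∀ z ∈ Ioo c d, φ g z ∈ Ioo c d → φ g z = z := by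
  obtain ⟨n, y, hy⟩ := nonempty_interior_of_iUnion_of_closed
    (fun n : ℕ => isClosed_noSmallRightShift φ (1 / (n + 1)))
    (eq_univ_of_forall fun x => mem_iUnion.2 (hcover x))
  obtain ⟨r, hr, hball⟩ := Metric.mem_nhds_iff.1 (mem_interior_iff_mem_nhds.1 hy)
  set δ := min r (1 / (n + 1) / 2)
  have hδ : 0 < δ := lt_min hr (by positivity)
  refine ⟨y - δ, y + δ, by linarith, rigid_of_subset_noSmallRightShift φ (ε := 1 / (n + 1)) ?_ ?_⟩
  · rw [← Real.ball_eq_Ioo]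
    exact (Metric.ball_subset_ball (min_le_left _ _)).trans hball
  · linarith [min_le_right r (1 / (n + 1) / 2)]

theorem exists_orbit_accumulating_right_of_not_hasWanderingInterval
    (hφ : ¬ HasWanderingInterval φ) :
    ∃ x, ∀ b > x, ∃ g, φ g x ∈ Ioo x b := by
  by_contra! hno
  obtain ⟨c, d, hcd, hrigid⟩ := exists_rigid_Ioo φ fun x => by
    obtain ⟨b, hxb, hb⟩ := hno x
    obtain ⟨n, hn⟩ := exists_nat_one_div_lt (sub_pos.2 hxb)
    exact ⟨n, fun g hg => hb g ⟨by linarith [hg.1], by linarith [hg.2]⟩⟩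
  exact hφ (hasWanderingInterval_of_rigid φ hcd hrigid)

variable (x : ℝ)

def orbit : Set ℝ := range fun g => φ g x

variable {φ x}

theorem apply_mem_orbit {y : ℝ} (hy : y ∈ orbit φ x) (g : G) : φ g y ∈ orbit φ x := by
  obtain ⟨k, rfl⟩ := hy
  exact ⟨g * k, by simp⟩

theorem self_mem_orbit : x ∈ orbit φ x := ⟨1, by simp⟩

variable (φ x) in
def orbitRestrict : G →* (orbit φ x ≃o orbit φ x) where
  toFun g :=
    { toFun := fun y => ⟨φ g y, apply_mem_orbit y.2 g⟩
      invFun := fun y => ⟨φ g⁻¹ y, apply_mem_orbit y.2 g⁻¹⟩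
      left_inv := fun y => Subtype.ext (by simp)
      right_inv := fun y => Subtype.ext (by simp)
      map_rel_iff' := (φ g).le_iff_le }
  map_one' := by ext; simp
  map_mul' g k := by ext; simp

theorem surjective_orbitRestrict_apply_self :
    Function.Surjective fun g => orbitRestrict φ x g ⟨x, self_mem_orbit⟩ := by
  rintro ⟨_, g, rfl⟩
  exact ⟨g, Subtype.ext (by simp [orbitRestrict])⟩

theorem exists_mem_orbit_Ioo (hx : ∀ b > x, ∃ g, φ g x ∈ Ioo x b) {y : ℝ} (hy : y ∈ orbit φ x)
    {b : ℝ} (hyb : y < b) : ∃ z ∈ orbit φ x, z ∈ Ioo y b := by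
  obtain ⟨k, rfl⟩ := hy
  obtain ⟨g, hg⟩ := hx ((φ k).symm b) ((φ k).lt_symm_apply.2 hyb)
  exact ⟨_, apply_mem_orbit ⟨g, rfl⟩ k, (φ k).strictMono hg.1, (φ k).lt_symm_apply.1 hg.2⟩

theorem exists_isTopTransitive_of_orbit_accumulating_right
    (hx : ∀ b > x, ∃ g, φ g x ∈ Ioo x b) :
    ∃ ψ : G →* (ℝ ≃o ℝ), IsTopTransitive ψ := by
  have : DenselyOrdered (orbit φ x) := ⟨fun a b hab =>
    let ⟨z, hz, hz'⟩ := exists_mem_orbit_Ioo hx a.2 hab; ⟨⟨z, hz⟩, hz'⟩⟩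
  have : NoMaxOrder (orbit φ x) := ⟨fun a =>
    let ⟨z, hz, hz'⟩ := exists_mem_orbit_Ioo hx a.2 (lt_add_one _); ⟨⟨z, hz⟩, hz'.1⟩⟩
  have : NoMinOrder (orbit φ x) := by
    obtain ⟨g, hg, -⟩ := hx (x + 1) (lt_add_one x)
    have hlt : φ g⁻¹ x < x := by simpa using (φ g⁻¹).strictMono hg
    refine ⟨fun ⟨_, k, hk⟩ => ⟨⟨φ k (φ g⁻¹ x), apply_mem_orbit ⟨g⁻¹, rfl⟩ k⟩, ?_⟩⟩
    exact hk ▸ (φ k).strictMono hlt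
  have : Nonempty (orbit φ x) := ⟨⟨x, self_mem_orbit⟩⟩
  obtain ⟨D, hD, hDdense⟩ := exists_countable_orderDense (orbit φ x)
  obtain ⟨h, hh, hhd⟩ := exists_strictMono_denseRange hD hDdense
  obtain ⟨ψ, hψ⟩ := exists_monoidHom_semiconj hh hhd (orbitRestrict φ x)
  have horbit : range (fun g => ψ g (h ⟨x, self_mem_orbit⟩)) = range h := by
    simp only [hψ]
    exact surjective_orbitRestrict_apply_self.range_comp h
  exact ⟨ψ, isTopTransitive_of_denseRange_orbit ψ (by rwa [DenseRange, horbit])⟩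

end RealAction

/-- Dichotomy: every group either admits a topologically transitive orientation-preserving
action on `ℝ`, or every orientation-preserving action of it on `ℝ` has a wandering
interval. -/
theorem stmt_9 (G : Type*) [Group G] :
    (∃ φ : G →* (ℝ ≃o ℝ), IsTopTransitive φ) ∨
      ∀ φ : G →* (ℝ ≃o ℝ), HasWanderingInterval φ := by
  refine or_iff_not_imp_right.2 fun h => ?_
  obtain ⟨φ, hφ⟩ := not_forall.1 h
  obtain ⟨x, hx⟩ := RealAction.exists_orbit_accumulating_right_of_not_hasWanderingInterval φ hφ
  exact RealAction.exists_isTopTransitive_of_orbit_accumulating_right hx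
end

section
/- Let G be a group with a normal subgroup H such that G/H is infinite cyclic. If H admits a topologically transitive action on ℝ by orientation-preserving homeomorphisms, then so does G. -/
/-!
Pick `t ∈ G` mapping to a generator of `G ⧸ H ≅ ℤ` and write `N : G → ℤ` for the projection.
Then `c(g, n) = t^(-(n + N g)) g t^n` lies in `H` and satisfies the cocycle identity
`c(g₁g₂, n) = c(g₁, n + N g₂) c(g₂, n)`. Hence `G` acts on `ℝ` by sending each integer `n` to
`n + N g` and each interval `(n, n + 1)`, identified with `ℝ` through the sigmoid, to
`(n + N g, n + N g + 1)` by the action of `c(g, n)`: this realises the action of `G` induced from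
the action of `H`. Given nonempty open `U` and `V`, choose intervals `(k, k + 1)` and
`(m, m + 1)` that they meet; transitivity of `H` in the sigmoid coordinates of these pieces gives
some `h ∈ H`, and then `t^m h t^(-k)` moves a point of `U` into `V`.
-/

open Set Real

namespace Real

noncomputable def logit (y : ℝ) : ℝ := -log (y⁻¹ - 1)

lemma logit_sigmoid (x : ℝ) : logit (sigmoid x) = x := by
  simp [logit, sigmoid_def]

lemma sigmoid_logit {y : ℝ} (hy : y ∈ Ioo 0 1) : sigmoid (logit y) = y := by
  have hpos : 0 < y⁻¹ - 1 := by rw [sub_pos, one_lt_inv_iff₀]; exact hy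
  simp [logit, sigmoid_def, exp_log hpos]

lemma strictMonoOn_logit : StrictMonoOn logit (Ioo 0 1) := fun x hx y hy hxy => by
  rwa [← sigmoid_lt_iff, sigmoid_logit hx, sigmoid_logit hy]

/-- Conjugation of `f` by `sigmoid : ℝ ≃ (0, 1)`, extended to `[0, 1)` by fixing `0`. -/
noncomputable def sigmoidConj (f : ℝ ≃o ℝ) (r : ℝ) : ℝ :=
  if r = 0 then 0 else sigmoid (f (logit r))

section sigmoidConj

variable (f g : ℝ ≃o ℝ)

@[simp]
lemma sigmoidConj_zero : sigmoidConj f 0 = 0 := if_pos rfl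

lemma sigmoidConj_of_ne_zero {r : ℝ} (hr : r ≠ 0) : sigmoidConj f r = sigmoid (f (logit r)) :=
  if_neg hr

lemma sigmoidConj_sigmoid (s : ℝ) : sigmoidConj f (sigmoid s) = sigmoid (f s) := by
  rw [sigmoidConj_of_ne_zero f (sigmoid_pos s).ne', logit_sigmoid]

lemma sigmoidConj_mem_Ico (r : ℝ) : sigmoidConj f r ∈ Ico 0 1 := by
  by_cases hr : r = 0
  · simp [hr]
  · rw [sigmoidConj_of_ne_zero f hr]
    exact ⟨(sigmoid_pos _).le, sigmoid_lt_one _⟩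

lemma sigmoidConj_mul (r : ℝ) : sigmoidConj (f * g) r = sigmoidConj f (sigmoidConj g r) := by
  by_cases hr : r = 0
  · simp [hr]
  · rw [sigmoidConj_of_ne_zero _ hr, sigmoidConj_of_ne_zero g hr, sigmoidConj_sigmoid,
      RelIso.mul_apply]

lemma sigmoidConj_one {r : ℝ} (hr : r ∈ Ico 0 1) : sigmoidConj 1 r = r := by
  rcases hr.1.eq_or_lt with rfl | hr₀
  · exact sigmoidConj_zero 1
  · rw [sigmoidConj_of_ne_zero 1 hr₀.ne', RelIso.coe_one, id, sigmoid_logit ⟨hr₀, hr.2⟩]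

lemma strictMonoOn_sigmoidConj : StrictMonoOn (sigmoidConj f) (Ico 0 1) := by
  intro x hx y hy hxy
  have hy₀ : 0 < y := hx.1.trans_lt hxy
  rw [sigmoidConj_of_ne_zero f hy₀.ne']
  rcases hx.1.eq_or_lt with rfl | hx₀
  · rw [sigmoidConj_zero]; exact sigmoid_pos _
  · rw [sigmoidConj_of_ne_zero f hx₀.ne']
    exact sigmoid_strictMono (f.strictMono (strictMonoOn_logit ⟨hx₀, hx.2⟩ ⟨hy₀, hy.2⟩ hxy))

end sigmoidConj

noncomputable def unitIntervalGlue (d : ℤ) (f : ℤ → ℝ ≃o ℝ) (x : ℝ) : ℝ :=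
  ((⌊x⌋ + d : ℤ) : ℝ) + sigmoidConj (f ⌊x⌋) (Int.fract x)

section unitIntervalGlue

variable (d : ℤ) (f : ℤ → ℝ ≃o ℝ)

lemma floor_unitIntervalGlue (x : ℝ) : ⌊unitIntervalGlue d f x⌋ = ⌊x⌋ + d := by
  rw [unitIntervalGlue, Int.floor_intCast_add,
    Int.floor_eq_zero_iff.mpr (sigmoidConj_mem_Ico _ _), add_zero]

lemma fract_unitIntervalGlue (x : ℝ) :
    Int.fract (unitIntervalGlue d f x) = sigmoidConj (f ⌊x⌋) (Int.fract x) := by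
  rw [unitIntervalGlue, Int.fract_intCast_add, Int.fract_eq_self.mpr (sigmoidConj_mem_Ico _ _)]

lemma unitIntervalGlue_intCast_add_sigmoid (k : ℤ) (s : ℝ) :
    unitIntervalGlue d f (k + sigmoid s) = ((k + d : ℤ) : ℝ) + sigmoid (f k s) := by
  have hs : sigmoid s ∈ Ico (0 : ℝ) 1 := ⟨(sigmoid_pos s).le, sigmoid_lt_one s⟩
  rw [unitIntervalGlue, Int.floor_intCast_add, Int.floor_eq_zero_iff.mpr hs, add_zero,
    Int.fract_intCast_add, Int.fract_eq_self.mpr hs, sigmoidConj_sigmoid]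

lemma unitIntervalGlue_comp (d' : ℤ) (f' : ℤ → ℝ ≃o ℝ) (x : ℝ) :
    unitIntervalGlue d f (unitIntervalGlue d' f' x) =
      unitIntervalGlue (d + d') (fun n => f (n + d') * f' n) x := by
  rw [unitIntervalGlue, floor_unitIntervalGlue, fract_unitIntervalGlue, unitIntervalGlue,
    sigmoidConj_mul]
  push_cast; ring

lemma unitIntervalGlue_zero_one (x : ℝ) : unitIntervalGlue 0 (fun _ => 1) x = x := by
  rw [unitIntervalGlue, sigmoidConj_one ⟨Int.fract_nonneg x, Int.fract_lt_one x⟩, add_zero,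
    Int.floor_add_fract]

lemma strictMono_unitIntervalGlue : StrictMono (unitIntervalGlue d f) := by
  intro x y hxy
  rcases (Int.floor_mono hxy.le).eq_or_lt with hfl | hfl
  · have hfr : Int.fract x < Int.fract y := by
      rw [Int.fract, Int.fract, hfl]; linarith
    have := strictMonoOn_sigmoidConj (f ⌊x⌋) ⟨Int.fract_nonneg x, Int.fract_lt_one x⟩
      ⟨Int.fract_nonneg y, Int.fract_lt_one y⟩ hfr
    rw [unitIntervalGlue, unitIntervalGlue, ← hfl]
    linarith
  · have hx := sigmoidConj_mem_Ico (f ⌊x⌋) (Int.fract x)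
    have hy := sigmoidConj_mem_Ico (f ⌊y⌋) (Int.fract y)
    have hfl' : ((⌊x⌋ + d : ℤ) : ℝ) + 1 ≤ ((⌊y⌋ + d : ℤ) : ℝ) := by exact_mod_cast by omega
    rw [unitIntervalGlue, unitIntervalGlue]
    linarith [hx.2, hy.1]

end unitIntervalGlue

lemma exists_intCast_add_sigmoid_mem {U : Set ℝ} (hU : IsOpen U) (hne : U.Nonempty) :
    ∃ k : ℤ, ((fun s => (k : ℝ) + sigmoid s) ⁻¹' U).Nonempty := by
  obtain ⟨x, hxU, hx⟩ :=
    ((countable_range ((↑) : ℤ → ℝ)).dense_compl ℝ).inter_open_nonempty U hU hne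
  have hfr : Int.fract x ∈ Ioo 0 1 :=
    ⟨(Int.fract_nonneg x).lt_of_ne' (Int.fract_ne_zero_iff.mpr hx), Int.fract_lt_one x⟩
  refine ⟨⌊x⌋, logit (Int.fract x), ?_⟩
  simpa [sigmoid_logit hfr] using hxU

end Real

noncomputable def OrderIso.homOfStrictMono {G α : Type*} [Group G] [LinearOrder α]
    (F : G → α → α) (hF : ∀ g, StrictMono (F g)) (h_one : ∀ x, F 1 x = x)
    (h_mul : ∀ g h x, F (g * h) x = F g (F h x)) : G →* (α ≃o α) where
  toFun g := (hF g).orderIsoOfSurjective (F g) fun x =>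
    ⟨F g⁻¹ x, by rw [← h_mul, mul_inv_cancel, h_one]⟩
  map_one' := by ext x; exact h_one x
  map_mul' g h := by ext x; exact h_mul g h x

@[simp]
lemma OrderIso.homOfStrictMono_apply {G α : Type*} [Group G] [LinearOrder α]
    (F : G → α → α) (hF : ∀ g, StrictMono (F g)) (h_one : ∀ x, F 1 x = x)
    (h_mul : ∀ g h x, F (g * h) x = F g (F h x)) (g : G) (x : α) :
    OrderIso.homOfStrictMono F hF h_one h_mul g x = F g x :=
  rfl

section InducedAction

variable {G : Type*} [Group G] (ν : G →* Multiplicative ℤ) (t : G)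

def shiftConj (g : G) (n : ℤ) : G := t ^ (-(n + (ν g).toAdd)) * g * t ^ n

lemma shiftConj_mul (g₁ g₂ : G) (n : ℤ) :
    shiftConj ν t (g₁ * g₂) n = shiftConj ν t g₁ (n + (ν g₂).toAdd) * shiftConj ν t g₂ n := by
  simp only [shiftConj, map_mul, toAdd_mul]
  group

lemma shiftConj_one (n : ℤ) : shiftConj ν t 1 n = 1 := by
  simp only [shiftConj, map_one, toAdd_one]
  group

variable {ν t}

lemma shiftConj_mem_ker (ht : ν t = .ofAdd 1) (g : G) (n : ℤ) :
    shiftConj ν t g n ∈ ν.ker := by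
  rw [MonoidHom.mem_ker, ← toAdd_eq_zero]
  simp only [shiftConj, map_mul, map_zpow, ht, toAdd_mul, toAdd_zpow, toAdd_ofAdd]
  ring

lemma shiftConj_zpow_mul_mul_zpow (ht : ν t = .ofAdd 1) {h : G} (hh : h ∈ ν.ker) (k m : ℤ) :
    shiftConj ν t (t ^ m * h * t ^ (-k)) k = h := by
  rw [MonoidHom.mem_ker] at hh
  simp only [shiftConj, map_mul, map_zpow, ht, hh, toAdd_mul, toAdd_zpow, toAdd_ofAdd, toAdd_one]
  group

variable {H : Subgroup G} (ht : ν t = .ofAdd 1) (hker : ν.ker = H)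

def shiftCocycle (g : G) (n : ℤ) : H := ⟨shiftConj ν t g n, hker ▸ shiftConj_mem_ker ht g n⟩

lemma shiftCocycle_mul (g₁ g₂ : G) (n : ℤ) :
    shiftCocycle ht hker (g₁ * g₂) n =
      shiftCocycle ht hker g₁ (n + (ν g₂).toAdd) * shiftCocycle ht hker g₂ n :=
  Subtype.ext (shiftConj_mul ν t g₁ g₂ n)

lemma shiftCocycle_one (n : ℤ) : shiftCocycle ht hker 1 n = 1 :=
  Subtype.ext (shiftConj_one ν t n)

lemma shiftCocycle_zpow_mul_mul_zpow (h : H) (k m : ℤ) :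
    shiftCocycle ht hker (t ^ m * h * t ^ (-k)) k = h :=
  Subtype.ext (shiftConj_zpow_mul_mul_zpow ht (hker ▸ h.2) k m)

noncomputable def inducedAction (φ : H →* (ℝ ≃o ℝ)) : G →* (ℝ ≃o ℝ) :=
  OrderIso.homOfStrictMono
    (fun g => unitIntervalGlue (ν g).toAdd fun n => φ (shiftCocycle ht hker g n))
    (fun g => strictMono_unitIntervalGlue _ _)
    (fun x => by simpa [shiftCocycle_one] using unitIntervalGlue_zero_one x)
    (fun g₁ g₂ x => by simp only [unitIntervalGlue_comp, map_mul, toAdd_mul, shiftCocycle_mul])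

theorem isTopTransitive_inducedAction {φ : H →* (ℝ ≃o ℝ)} (hφ : IsTopTransitive φ) :
    IsTopTransitive (inducedAction ht hker φ) := by
  intro U V hU hV hU₀ hV₀
  obtain ⟨k, hk⟩ := exists_intCast_add_sigmoid_mem hU hU₀
  obtain ⟨m, hm⟩ := exists_intCast_add_sigmoid_mem hV hV₀
  obtain ⟨h, -, ⟨s, hsU, rfl⟩, hsV⟩ :=
    hφ _ _ (hU.preimage (by fun_prop)) (hV.preimage (by fun_prop)) hk hm
  refine ⟨t ^ m * h * t ^ (-k), _, mem_image_of_mem _ hsU, ?_⟩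
  have hN : (ν (t ^ m * h * t ^ (-k))).toAdd = m - k := by
    simp [ht, (MonoidHom.mem_ker).mp (hker ▸ h.2 : (h : G) ∈ ν.ker), sub_eq_add_neg]
  rw [inducedAction, OrderIso.homOfStrictMono_apply, unitIntervalGlue_intCast_add_sigmoid,
    shiftCocycle_zpow_mul_mul_zpow, hN, add_sub_cancel]
  exact hsV

end InducedAction

/-- If `H ⊴ G` with `G/H` infinite cyclic and `H` admits a topologically transitive
orientation-preserving action on `ℝ`, then so does `G`. -/
theorem stmt_10 (G : Type*) [Group G] (H : Subgroup G) [H.Normal]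
    (hcyc : Nonempty ((G ⧸ H) ≃* Multiplicative ℤ))
    (hH : ∃ φ : H →* (ℝ ≃o ℝ), IsTopTransitive φ) :
    ∃ φ : G →* (ℝ ≃o ℝ), IsTopTransitive φ := by
  obtain ⟨φ, hφ⟩ := hH
  obtain ⟨e⟩ := hcyc
  have hker : ((e : G ⧸ H →* Multiplicative ℤ).comp (QuotientGroup.mk' H)).ker = H := by
    rw [MonoidHom.ker_mulEquiv_comp, QuotientGroup.ker_mk']
  obtain ⟨t, ht⟩ := (e.surjective.comp (QuotientGroup.mk'_surjective H)) (.ofAdd 1)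
  exact ⟨inducedAction ht hker φ, isTopTransitive_inducedAction ht hker hφ⟩
end

section
/- Every orientation-preserving action of SL(2, ℤ) on ℝ is trivial: if φ: SL(2,ℤ) → Homeo₊(ℝ) is a group homomorphism, then φ(g) is the identity for every g. -/
/-!
`SL(2, ℤ)` is generated by `S` and `S * T`, of orders 4 and 6. An order automorphism of a linear
order has no nontrivial finite order: if it moves `x` up (down), all its positive iterates move `x`
up (down). Hence every homomorphism into `ℝ ≃o ℝ` kills both generators.
-/

open Matrix ModularGroup

theorem OrderIso.coe_pow {α : Type*} [Preorder α] (f : α ≃o α) (n : ℕ) : ⇑(f ^ n) = (⇑f)^[n] := by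
  induction n with
  | zero => rfl
  | succ n ih => rw [pow_succ', RelIso.coe_mul, ih, Function.iterate_succ']

theorem OrderIso.eq_one_of_isOfFinOrder {α : Type*} [LinearOrder α] {f : α ≃o α}
    (hf : IsOfFinOrder f) : f = 1 := by
  obtain ⟨n, hn, hfn⟩ := isOfFinOrder_iff_pow_eq_one.mp hf
  ext x
  have hiter : id^[n] x = f^[n] x := by rw [← f.coe_pow, hfn, Function.iterate_id]; rfl
  exact (((Function.Commute.id_left (f := ⇑f)).iterate_pos_eq_iff_map_eq monotone_id
    f.strictMono hn).mp hiter).symm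

theorem MonoidHom.eq_one_of_closure_isOfFinOrder {G H : Type*} [Group G] [Group H] (φ : G →* H)
    {s : Set G} (hs : Subgroup.closure s = ⊤) (hfin : ∀ g ∈ s, IsOfFinOrder g)
    (htf : ∀ h : H, IsOfFinOrder h → h = 1) (g : G) : φ g = 1 := by
  have hle : Subgroup.closure s ≤ φ.ker :=
    (Subgroup.closure_le _).mpr fun x hx ↦ htf _ (φ.isOfFinOrder (hfin x hx))
  exact hle (hs ▸ Subgroup.mem_top g)

lemma ModularGroup.S_pow_four : S ^ 4 = 1 := by decide
lemma ModularGroup.S_mul_T_pow_six : (S * T) ^ 6 = 1 := by decide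

lemma ModularGroup.closure_S_S_mul_T_eq_top : Subgroup.closure {S, S * T} = ⊤ := by
  refine eq_top_iff.mpr (SpecialLinearGroup.SL2Z_generators ▸ (Subgroup.closure_le _).mpr ?_)
  have hS : S ∈ Subgroup.closure {S, S * T} := Subgroup.subset_closure (by simp)
  have hST : S * T ∈ Subgroup.closure {S, S * T} := Subgroup.subset_closure (by simp)
  rintro x (rfl | rfl)
  · exact hS
  · simpa using Subgroup.mul_mem _ (Subgroup.inv_mem _ hS) hST

/-- Every orientation-preserving action of `SL(2, ℤ)` on `ℝ` is trivial. -/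
theorem stmt_11 (φ : Matrix.SpecialLinearGroup (Fin 2) ℤ →* (ℝ ≃o ℝ)) :
    ∀ g : Matrix.SpecialLinearGroup (Fin 2) ℤ, φ g = 1 := by
  refine φ.eq_one_of_closure_isOfFinOrder closure_S_S_mul_T_eq_top ?_ fun _ ↦ OrderIso.eq_one_of_isOfFinOrder
  rintro x (rfl | rfl)
  · exact isOfFinOrder_iff_pow_eq_one.mpr ⟨4, by norm_num, S_pow_four⟩
  · exact isOfFinOrder_iff_pow_eq_one.mpr ⟨6, by norm_num, S_mul_T_pow_six⟩
end

section
/- Let G be a polycyclic group in which all factors of some subnormal series are infinite cyclic (poly-infinite-cyclic). Then there is a decreasing sequence of normal subgroups G = G₀ ⊵ G₁ ⊵ ... ⊵ G_l = {e} of G such that each quotient G_i/G_{i+1} is a free abelian group of finite rank. -/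
/-!
Write `K` for the kernel of `G → Gᵃᵇ / torsion`. A poly-ℤ group is finitely generated, so
`G ⧸ K ≅ ℤᵈ`, and `K` is characteristic. Every homomorphism `G → ℤ` kills `K` because `ℤ` is
torsion-free abelian; in particular `K` lies in the kernel of the first step of the series, so `K`
is again poly-(subgroup of `ℤ`), with a shorter series. By induction `K` has a characteristic
series with free abelian factors of finite rank, and a characteristic subgroup of a
characteristic subgroup is characteristic, hence normal, in `G`.
-/

open Subgroup Function

universe u

theorem Group.fg_of_fg_ker_of_fg_range {G H : Type*} [Group G] [Group H] (φ : G →* H)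
    [Group.FG φ.ker] [Group.FG φ.range] : Group.FG G := by
  obtain ⟨S, hS, hSfin⟩ := Group.fg_iff.mp ‹Group.FG φ.ker›
  obtain ⟨T, hT, hTfin⟩ := Group.fg_iff.mp ‹Group.FG φ.range›
  choose lift hlift using fun t : φ.range => t.2
  let C := closure (φ.ker.subtype '' S ∪ lift '' T)
  have hker : φ.ker ≤ C := by
    rw [← φ.ker.range_subtype, MonoidHom.range_eq_map, ← hS, MonoidHom.map_closure]
    exact Subgroup.closure_mono Set.subset_union_left
  have hrange : map φ C = map φ ⊤ := by
    apply le_antisymm (map_mono le_top)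
    rw [← MonoidHom.range_eq_map, ← φ.range.range_subtype, MonoidHom.range_eq_map, ← hT,
      MonoidHom.map_closure, MonoidHom.map_closure]
    apply Subgroup.closure_mono
    rintro _ ⟨t, ht, rfl⟩
    exact ⟨lift t, Set.mem_union_right _ (Set.mem_image_of_mem lift ht), hlift t⟩
  refine Group.fg_iff.mpr ⟨_, map_injective_of_ker_le φ hker le_top hrange, ?_⟩
  exact (hSfin.image _).union (hTfin.image _)

instance IsCyclic.fg (G : Type*) [Group G] [IsCyclic G] : Group.FG G := by
  obtain ⟨g, hg⟩ := IsCyclic.exists_generator (α := G)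
  exact Group.fg_iff.mpr ⟨{g}, by rw [← zpowers_eq_closure, eq_top_iff]; exact fun x _ => hg x,
    Set.finite_singleton g⟩

theorem AddCommGroup.exists_surjective_ker_eq_torsion (A : Type*) [AddCommGroup A]
    [AddGroup.FG A] :
    ∃ (d : ℕ) (χ : A →+ (Fin d → ℤ)), Surjective χ ∧ χ.ker = AddCommGroup.torsion A := by
  have : Module.Finite ℤ A := Module.Finite.iff_addGroup_fg.mpr ‹_›
  let T := Submodule.torsion ℤ A
  have : Module.Free ℤ (A ⧸ T) := Module.free_of_finite_type_torsion_free'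
  let e := (Module.finBasis ℤ (A ⧸ T)).equivFun
  refine ⟨_, (e.toLinearMap ∘ₗ T.mkQ).toAddMonoidHom, e.surjective.comp T.mkQ_surjective, ?_⟩
  ext x
  simp [T, Submodule.Quotient.mk_eq_zero, ← Submodule.torsion_int]

def torsionFreeAbelianizationKer (G : Type*) [Group G] : Subgroup G :=
  (CommGroup.torsion (Abelianization G)).comap Abelianization.of

section torsionFreeAbelianizationKer

variable {G : Type*} [Group G]

theorem mem_torsionFreeAbelianizationKer {x : G} :
    x ∈ torsionFreeAbelianizationKer G ↔ IsOfFinOrder (Abelianization.of x) :=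
  Iff.rfl

instance : (torsionFreeAbelianizationKer G).Characteristic := by
  refine characteristic_iff_le_comap.mpr fun e x hx => ?_
  rw [mem_comap, mem_torsionFreeAbelianizationKer, ← Abelianization.map_of]
  exact MonoidHom.isOfFinOrder _ hx

theorem torsionFreeAbelianizationKer_le_ker {M : Type*} [CommGroup M] [IsMulTorsionFree M]
    (φ : G →* M) : torsionFreeAbelianizationKer G ≤ φ.ker := fun x hx => by
  simpa using ((Abelianization.lift φ).isOfFinOrder hx).eq_one'

theorem exists_surjective_ker_eq_torsionFreeAbelianizationKer [Group.FG G] :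
    ∃ (d : ℕ) (ψ : G →* Multiplicative (Fin d → ℤ)),
      Surjective ψ ∧ ψ.ker = torsionFreeAbelianizationKer G := by
  have hof : Surjective (Abelianization.of (G := G)) := Quotient.mk_surjective
  have : Group.FG (Abelianization G) := Group.fg_of_surjective hof
  obtain ⟨d, χ, hχ, hker⟩ :=
    AddCommGroup.exists_surjective_ker_eq_torsion (Additive (Abelianization G))
  refine ⟨d, (AddMonoidHom.toMultiplicativeLeft χ).comp Abelianization.of, hχ.comp hof, ?_⟩
  ext x
  rw [MonoidHom.mem_ker, mem_torsionFreeAbelianizationKer, ← isOfFinAddOrder_ofMul_iff,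
    ← AddCommGroup.mem_torsion, ← hker]
  exact Iff.rfl

end torsionFreeAbelianizationKer

/-- `G` has a subnormal series of length `k` whose factors embed into `ℤ`; not asking for them
to be onto `ℤ` makes the class pass to subgroups. -/
def HasIntSeries : ℕ → (G : Type u) → [Group G] → Prop
  | 0, G, _ => Subsingleton G
  | k + 1, G, _ => ∃ φ : G →* Multiplicative ℤ, HasIntSeries k φ.ker

namespace HasIntSeries

theorem of_injective {k : ℕ} {G H : Type u} [Group G] [Group H] (e : H →* G)
    (he : Injective e) (h : HasIntSeries k G) : HasIntSeries k H := by
  induction k generalizing G H with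
  | zero =>
    have : Subsingleton G := h
    exact he.subsingleton
  | succ k ih =>
    obtain ⟨φ, hφ⟩ := h
    refine ⟨φ.comp e, ih ((e.domRestrict (φ.comp e).ker).codRestrict φ.ker fun x => x.2) ?_ hφ⟩
    exact fun x y hxy => Subtype.ext (he (congrArg Subtype.val hxy))

theorem of_series {G : Type u} [Group G] {k : ℕ} (N : ℕ → Subgroup G) (h0 : N 0 = ⊤)
    (hk : N k = ⊥) (hstep : ∀ i < k, N (i + 1) ≤ N i ∧
      ∃ f : N i →* Multiplicative ℤ, f.ker = (N (i + 1)).subgroupOf (N i)) :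
    HasIntSeries k G := by
  suffices h : ∀ m j, j + m = k → HasIntSeries m (N j) from
    of_injective ((MonoidHom.id G).codRestrict (N 0) fun x => h0 ▸ mem_top x)
      (fun x y hxy => congrArg Subtype.val hxy) (h k 0 (zero_add k))
  intro m
  induction m with
  | zero =>
    rintro j rfl
    change Subsingleton (N (j + 0))
    rw [hk]
    infer_instance
  | succ m ih =>
    rintro j rfl
    obtain ⟨-, f, hf⟩ := hstep j (by omega)
    refine ⟨f, of_injective (((N j).subtype.comp f.ker.subtype).codRestrict (N (j + 1))
      fun x => by simpa [hf, mem_subgroupOf] using x.2) ?_ (ih (j + 1) (by omega))⟩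
    exact fun x y hxy => Subtype.ext (Subtype.ext (congrArg Subtype.val hxy :))

theorem fg {k : ℕ} {G : Type u} [Group G] (h : HasIntSeries k G) : Group.FG G := by
  induction k generalizing G with
  | zero =>
    have : Subsingleton G := h
    infer_instance
  | succ k ih =>
    obtain ⟨φ, hφ⟩ := h
    have := ih hφ
    exact Group.fg_of_fg_ker_of_fg_range φ

end HasIntSeries

theorem Subgroup.exists_surjective_ker_eq_map_subtype {G M : Type*} [Group G] [Group M]
    {K : Subgroup G} {A B : Subgroup K} (f : A →* M) (hf : Surjective f)
    (hker : f.ker = B.subgroupOf A) :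
    ∃ g : A.map K.subtype →* M, Surjective g ∧
      g.ker = (B.map K.subtype).subgroupOf (A.map K.subtype) := by
  let e := A.equivMapOfInjective K.subtype K.subtype_injective
  refine ⟨f.comp e.symm.toMonoidHom, hf.comp e.symm.surjective, ?_⟩
  ext x
  have hx : K.subtype (e.symm x : K) = x := by
    conv_rhs => rw [← e.apply_symm_apply x]
    rfl
  rw [MonoidHom.mem_ker, MonoidHom.comp_apply, ← MonoidHom.mem_ker, hker, mem_subgroupOf,
    mem_subgroupOf, ← hx, mem_map_iff_mem K.subtype_injective]
  rfl

def HasCharFreeAbelianSeries (G : Type*) [Group G] : Prop :=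
  ∃ (l : ℕ) (Gs : ℕ → Subgroup G), 0 < l ∧ Gs 0 = ⊤ ∧ Gs l = ⊥ ∧
    ∀ i < l, Gs (i + 1) ≤ Gs i ∧ (Gs i).Characteristic ∧ (Gs (i + 1)).Characteristic ∧
      ∃ (d : ℕ) (f : Gs i →* Multiplicative (Fin d → ℤ)),
        Surjective f ∧ f.ker = (Gs (i + 1)).subgroupOf (Gs i)

theorem hasCharFreeAbelianSeries_of_subsingleton (G : Type*) [Group G] [Subsingleton G] :
    HasCharFreeAbelianSeries G := by
  refine ⟨1, fun _ => ⊤, one_pos, rfl, Subsingleton.elim _ _, fun _ _ => ?_⟩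
  refine ⟨le_rfl, inferInstance, inferInstance, 0, 1, fun y => ⟨1, Subsingleton.elim _ _⟩, ?_⟩
  exact Subsingleton.elim _ _

theorem HasCharFreeAbelianSeries.of_ker {G : Type*} [Group G] {d : ℕ}
    (ψ : G →* Multiplicative (Fin d → ℤ)) (hψ : Surjective ψ) [ψ.ker.Characteristic]
    (h : HasCharFreeAbelianSeries ψ.ker) : HasCharFreeAbelianSeries G := by
  obtain ⟨l, Gs, -, h0, hl_bot, hstep⟩ := h
  have hmap0 : (Gs 0).map ψ.ker.subtype = ψ.ker := by
    rw [h0, ← MonoidHom.range_eq_map, range_subtype]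
  refine ⟨l + 1, fun
    | 0 => ⊤
    | j + 1 => (Gs j).map ψ.ker.subtype, l.succ_pos, rfl,
    by simp [hl_bot], fun i hi => ?_⟩
  cases i with
  | zero =>
    dsimp only
    rw [hmap0]
    refine ⟨le_top, inferInstance, inferInstance, d, ψ.comp (⊤ : Subgroup G).subtype,
      fun y => ?_, ?_⟩
    · obtain ⟨x, rfl⟩ := hψ y
      exact ⟨⟨x, mem_top x⟩, rfl⟩
    · ext x
      exact Iff.rfl
  | succ j =>
    obtain ⟨hle, hchar, hchar', d', f, hf, hker⟩ := hstep j (by omega)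
    exact ⟨map_mono hle, inferInstance, inferInstance, d',
      exists_surjective_ker_eq_map_subtype f hf hker⟩

theorem HasIntSeries.hasCharFreeAbelianSeries {k : ℕ} {G : Type u} [Group G]
    (h : HasIntSeries k G) : HasCharFreeAbelianSeries G := by
  induction k generalizing G with
  | zero =>
    have : Subsingleton G := h
    exact hasCharFreeAbelianSeries_of_subsingleton G
  | succ k ih =>
    have : Group.FG G := h.fg
    obtain ⟨φ, hφ⟩ := h
    obtain ⟨d, ψ, hψ, hker⟩ := exists_surjective_ker_eq_torsionFreeAbelianizationKer (G := G)
    have hle : ψ.ker ≤ φ.ker := hker ▸ torsionFreeAbelianizationKer_le_ker φ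
    have : ψ.ker.Characteristic := hker ▸ inferInstance
    exact .of_ker ψ hψ (ih (hφ.of_injective (inclusion hle) (inclusion_injective hle)))

/-- If `G` is poly-infinite-cyclic (there is a subnormal series all of whose factors are
infinite cyclic; each factor being infinite cyclic is expressed via a surjective
homomorphism onto `ℤ` whose kernel is the next term), then there is a decreasing chain
`G = G₀ ⊵ G₁ ⊵ ... ⊵ G_l = {e}` of subgroups, each normal in `G`, with every factor
`Gᵢ/Gᵢ₊₁` free abelian of finite rank (i.e. isomorphic to `ℤ^d`). -/
theorem stmt_15 (G : Type*) [Group G]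
    (hpoly : ∃ (k : ℕ) (N : ℕ → Subgroup G), N 0 = ⊤ ∧ N k = ⊥ ∧
      ∀ i < k, (N (i + 1) ≤ N i) ∧
        ∃ f : ↥(N i) →* Multiplicative ℤ, Function.Surjective f ∧
          f.ker = (N (i + 1)).subgroupOf (N i)) :
    ∃ (l : ℕ) (Gs : ℕ → Subgroup G), 0 < l ∧ Gs 0 = ⊤ ∧ Gs l = ⊥ ∧
      ∀ i < l, (Gs (i + 1) ≤ Gs i) ∧ (Gs i).Normal ∧ (Gs (i + 1)).Normal ∧
        ∃ (d : ℕ) (f : ↥(Gs i) →* Multiplicative (Fin d → ℤ)),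
          Function.Surjective f ∧ f.ker = (Gs (i + 1)).subgroupOf (Gs i) := by
  obtain ⟨k, N, h0, hk, hstep⟩ := hpoly
  have hseries : HasIntSeries k G := .of_series N h0 hk fun i hi =>
    let ⟨hle, f, _, hf⟩ := hstep i hi; ⟨hle, f, hf⟩
  obtain ⟨l, Gs, hl, h0, hl_bot, hGs⟩ := hseries.hasCharFreeAbelianSeries
  refine ⟨l, Gs, hl, h0, hl_bot, fun i hi => ?_⟩
  obtain ⟨hle, hchar, hchar', hfactor⟩ := hGs i hi
  exact ⟨hle, normal_of_characteristic _, normal_of_characteristic _, hfactor⟩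
end

section
/- Let f, g be orientation-preserving homeomorphisms of ℝ with f∘g = g⁻¹∘f, let (u,v) be a bounded maximal open interval of ℝ ∖ Fix(g) with g(x) > x on (u,v), and suppose f((u,v)) = (u,v). Then u = v, a contradiction; hence no such configuration exists. -/
/-! If `f` conjugates `g` to `g⁻¹`, then `f` turns points pushed up by `g` into points pushed
down by `g`: from `x < g x` we get `f x < f (g x) = g⁻¹ (f x)`, i.e. `g (f x) < f x`. Since `g`
pushes every point of `(u, v)` up and `f` maps `(u, v)` into itself, any `x ∈ (u, v)` gives
`f x ∈ (u, v)` pushed both up and down. -/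

theorem OrderIso.apply_lt_of_lt_apply_of_conj_inv {α : Type*} [Preorder α] (f g : α ≃o α)
    {x : α} (hrel : f (g x) = g⁻¹ (f x)) (hx : x < g x) : g (f x) < f x := by
  have hfx : f x < g.symm (f x) := hrel ▸ f.strictMono hx
  exact g.lt_symm_apply.mp hfx

theorem stmt_17_general (f g : ℝ ≃o ℝ) (hrel : ∀ x : ℝ, f (g x) = g⁻¹ (f x))
    (u v : ℝ) (huv : u < v)
    (hpush : ∀ x ∈ Set.Ioo u v, x < g x)
    (hf : f '' Set.Ioo u v = Set.Ioo u v) : False := by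
  obtain ⟨x, hx⟩ := Set.nonempty_Ioo.mpr huv
  have hfx : f x ∈ Set.Ioo u v := hf ▸ Set.mem_image_of_mem f hx
  exact lt_asymm (hpush (f x) hfx)
    (f.apply_lt_of_lt_apply_of_conj_inv g (hrel x) (hpush x hx))

/-- Let `f, g` be orientation-preserving homeomorphisms of `ℝ` with `f ∘ g = g⁻¹ ∘ f`, and
let `(u, v)` be a bounded maximal open interval of `ℝ ∖ Fix(g)` with `g x > x` on `(u, v)`.
Then `f((u, v)) = (u, v)` is impossible. -/
theorem stmt_17 (f g : ℝ ≃o ℝ) (hrel : ∀ x : ℝ, f (g x) = g⁻¹ (f x))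
    (u v : ℝ) (huv : u < v) (hu : g u = u) (hv : g v = v)
    (hpush : ∀ x ∈ Set.Ioo u v, x < g x)
    (hf : f '' Set.Ioo u v = Set.Ioo u v) : False :=
  stmt_17_general f g hrel u v huv hpush hf
end

section
/- Let f = x ↦ x+1 and let g be the homeomorphism of ℝ given by g(x) = (x−n)^{2^{((-1)^n k^{-n})}} + n for x ∈ [n,n+1), with k ≥ 2 an integer. Then the orbit of 1/2 under the group generated by f and g is dense in ℝ; in particular this action is topologically transitive. -/
/-!
Put `φ c = (1/2) ^ 2 ^ c`, a homeomorphism of `ℝ` onto `(0, 1)`. On `[n, n+1)` the map `g` is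
conjugate by `c ↦ φ c + n` to the translation by `e n = (-1)ⁿ k⁻ⁿ`, and `f` is the translation
by `1`; hence `f ^ m * g ^ l * f ^ n` sends `1/2 = φ 0` to `φ (l * e n) + n + m`. The numbers
`l * e n` are the `k`-adic rationals, which are dense, and `(c, m) ↦ φ c + m` is continuous on
`ℝ × ℤ` with range `ℝ \ ℤ`, so the orbit is dense.
-/

open Function

theorem Function.Semiconj.zpow_relIso {α β : Type*} {r : α → α → Prop} [AddCommGroup β]
    {e : r ≃r r} {φ : β → α} {δ : β} (h : Semiconj φ (· + δ) e) (l : ℤ) :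
    Semiconj φ (· + l • δ) ⇑(e ^ l) := by
  induction l using Int.induction_on with
  | zero => intro c; simp
  | succ i ih =>
    intro c
    rw [zpow_add_one, RelIso.mul_apply, ← h c, ← ih (c + δ)]
    simp only [add_one_zsmul]
    abel_nf
  | pred i ih =>
    have h' : Semiconj φ (· - δ) ⇑e⁻¹ := fun c => by
      rw [← sub_add_cancel c δ, h (c - δ), RelIso.inv_apply_self, sub_add_cancel]
    intro c
    rw [zpow_sub_one, RelIso.mul_apply, ← h' c, ← ih (c - δ)]
    simp only [sub_one_zsmul]
    abel_nf

theorem dense_setOf_int_mul_neg_one_zpow_mul_zpow_neg {k : ℕ} (hk : 1 < k) :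
    Dense {x : ℝ | ∃ l n : ℤ, x = l * ((-1) ^ n * (k : ℝ) ^ (-n))} := by
  refine dense_of_exists_between fun a b hab => ?_
  obtain ⟨N, hN⟩ := pow_unbounded_of_one_lt (b - a)⁻¹ (Nat.one_lt_cast.mpr hk)
  obtain ⟨z, hz⟩ := exists_div_btwn (n := k ^ N) hab (by push_cast; exact hN)
  refine ⟨_, ⟨(-1) ^ N * z, N, ?_⟩, hz⟩
  have hsign : ((-1 : ℝ) ^ N) * (-1) ^ N = 1 := by rw [← mul_pow]; norm_num
  push_cast
  rw [zpow_neg, zpow_natCast, zpow_natCast, div_eq_mul_inv]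
  linear_combination (-(z * ((k : ℝ) ^ N)⁻¹)) * hsign

noncomputable def halfPowTwoPow (c : ℝ) : ℝ := (1 / 2 : ℝ) ^ (2 : ℝ) ^ c

@[fun_prop]
theorem continuous_halfPowTwoPow : Continuous halfPowTwoPow :=
  (Real.continuous_const_rpow (by norm_num)).comp (Real.continuous_const_rpow (by norm_num))

theorem halfPowTwoPow_zero : halfPowTwoPow 0 = 1 / 2 := by
  simp [halfPowTwoPow]

theorem halfPowTwoPow_rpow (c e : ℝ) :
    halfPowTwoPow c ^ (2 : ℝ) ^ e = halfPowTwoPow (c + e) := by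
  rw [halfPowTwoPow, halfPowTwoPow, ← Real.rpow_mul (by norm_num), ← Real.rpow_add two_pos]

theorem halfPowTwoPow_mem_Ioo (c : ℝ) : halfPowTwoPow c ∈ Set.Ioo 0 1 :=
  ⟨by unfold halfPowTwoPow; positivity,
    Real.rpow_lt_one (by norm_num) (by norm_num) (by positivity)⟩

theorem halfPowTwoPow_logb_neg_logb {t : ℝ} (ht : t ∈ Set.Ioo 0 1) :
    halfPowTwoPow (Real.logb 2 (-Real.logb 2 t)) = t := by
  have hl : Real.logb 2 t < 0 := Real.logb_neg one_lt_two ht.1 ht.2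
  rw [halfPowTwoPow, Real.rpow_logb two_pos (by norm_num) (by linarith), one_div,
    Real.inv_rpow (by norm_num), ← Real.rpow_neg (by norm_num), neg_neg,
    Real.rpow_logb two_pos (by norm_num) ht.1]

theorem floor_halfPowTwoPow_add_intCast (c : ℝ) (n : ℤ) : ⌊halfPowTwoPow c + n⌋ = n := by
  rw [Int.floor_add_intCast,
    Int.floor_eq_zero_iff.mpr (Set.Ioo_subset_Ico_self (halfPowTwoPow_mem_Ioo c)), zero_add]

theorem denseRange_halfPowTwoPow_add_intCast :
    DenseRange fun p : ℝ × ℤ => halfPowTwoPow p.1 + p.2 := by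
  refine ((Set.countable_range ((↑) : ℤ → ℝ)).dense_compl ℝ).mono fun x hx => ?_
  have hfract : Int.fract x ∈ Set.Ioo 0 1 :=
    ⟨Int.fract_pos.mpr fun h => hx ⟨_, h.symm⟩, Int.fract_lt_one x⟩
  exact ⟨(Real.logb 2 (-Real.logb 2 (Int.fract x)), ⌊x⌋), by
    simp only [halfPowTwoPow_logb_neg_logb hfract, Int.fract_add_floor]⟩

/-- With `f(x) = x + 1` and `g` the homeomorphism of `ℝ` given by
`g(x) = (x − n) ^ (2 ^ ((-1)ⁿ k⁻ⁿ)) + n` for `x ∈ [n, n+1)` (`k ≥ 2`), the orbit of `1/2`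
under the group generated by `f` and `g` is dense in `ℝ`. -/
theorem stmt_18 (k : ℕ) (hk : 2 ≤ k) (f g : ℝ ≃o ℝ)
    (hf : ∀ x : ℝ, f x = x + 1)
    (hg : ∀ x : ℝ,
      g x = (x - ⌊x⌋) ^ ((2 : ℝ) ^ ((-1 : ℝ) ^ ⌊x⌋ * (k : ℝ) ^ (-⌊x⌋))) + ⌊x⌋) :
    Dense {y : ℝ | ∃ h ∈ Subgroup.closure ({f, g} : Set (ℝ ≃o ℝ)), h (1 / 2 : ℝ) = y} := by
  set e : ℤ → ℝ := fun n => (-1) ^ n * (k : ℝ) ^ (-n)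
  have hf_zpow (m : ℤ) (x : ℝ) : (f ^ m) x = x + m := by
    simpa using ((show Semiconj id (· + 1) f from fun x => (hf x).symm).zpow_relIso m x).symm
  have hg_zpow (n l : ℤ) (c : ℝ) :
      (g ^ l) (halfPowTwoPow c + n) = halfPowTwoPow (c + l * e n) + n := by
    have hg_conj : Semiconj (halfPowTwoPow · + n) (· + e n) g := fun c => by
      rw [hg, floor_halfPowTwoPow_add_intCast, add_sub_cancel_right, halfPowTwoPow_rpow]
    simpa using (hg_conj.zpow_relIso l c).symm
  have hf_mem : f ∈ Subgroup.closure ({f, g} : Set (ℝ ≃o ℝ)) := Subgroup.subset_closure (by simp)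
  have hg_mem : g ∈ Subgroup.closure ({f, g} : Set (ℝ ≃o ℝ)) := Subgroup.subset_closure (by simp)
  have h_orbit (l n m : ℤ) : halfPowTwoPow (l * e n) + (n + m) ∈
      {y : ℝ | ∃ h ∈ Subgroup.closure ({f, g} : Set (ℝ ≃o ℝ)), h (1 / 2 : ℝ) = y} := by
    refine ⟨f ^ m * g ^ l * f ^ n,
      mul_mem (mul_mem (zpow_mem hf_mem m) (zpow_mem hg_mem l)) (zpow_mem hf_mem n), ?_⟩
    rw [RelIso.mul_apply, RelIso.mul_apply, ← halfPowTwoPow_zero, hf_zpow n, hg_zpow, hf_zpow,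
      zero_add, add_assoc]
  refine (denseRange_halfPowTwoPow_add_intCast.dense_image (by fun_prop)
    ((dense_setOf_int_mul_neg_one_zpow_mul_zpow_neg (by omega : 1 < k)).prod dense_univ)).mono ?_
  rintro _ ⟨⟨c, m⟩, ⟨⟨l, n, rfl⟩, -⟩, rfl⟩
  simpa [e] using h_orbit l n (m - n)
end
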